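/- arXiv:1605.01807 — 12 statements merged into one kernel-verified Lean document; each statement's English description precedes it below -/
import Mathlib

section
/- The ideal $(x,y)^{n+2}$ is contained in the ideal $(x^n, y^n, g)$, where $g = xy(x-y)(x+y-sy)$. -/
open MvPolynomial Pointwise

/-- The ideal `(x,y)^(n+2)` is contained in `(x^n, y^n, g)` where
`g = xy(x-y)(x+y-sy)`, with `s = X 0`, `x = X 1`, `y = X 2` in `k[s,x,y]`. -/
theorem stmt_0 (k : Type*) [Field k] (m n : ℕ) (hm : 4 ≤ m) (hchar : (m : k) ≠ 0)
    (hn : n = 2 * m + 1) :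
    (Ideal.span {(X 1 : MvPolynomial (Fin 3) k), X 2}) ^ (n + 2) ≤
      Ideal.span {(X 1 : MvPolynomial (Fin 3) k) ^ n, X 2 ^ n,
        X 1 * X 2 * (X 1 - X 2) * (X 1 + X 2 - X 0 * X 2)} := by
  set x : MvPolynomial (Fin 3) k := X 1 with hxdef
  set y : MvPolynomial (Fin 3) k := X 2 with hydef
  set s : MvPolynomial (Fin 3) k := X 0 with hsdef
  set g : MvPolynomial (Fin 3) k := x * y * (x - y) * (x + y - s * y) with hgdef
  set I : Ideal (MvPolynomial (Fin 3) k) := Ideal.span {x ^ n, y ^ n, g} with hIdef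
  have hxI : x ^ n ∈ I := Ideal.subset_span (by simp)
  have hyI : y ^ n ∈ I := Ideal.subset_span (by simp)
  have hgI : g ∈ I := Ideal.subset_span (by simp)
  -- key monomial lemma
  have key : ∀ i j : ℕ, i + j = n + 2 → x ^ i * y ^ j ∈ I := by
    intro i
    induction i using Nat.strong_induction_on with
    | _ i ih =>
      intro j hij
      by_cases hi : n ≤ i
      · obtain ⟨a, rfl⟩ := Nat.exists_eq_add_of_le hi
        have : x ^ (n + a) * y ^ j = x ^ a * y ^ j * x ^ n := by ring
        rw [this]
        exact I.mul_mem_left _ hxI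
      · by_cases hj : n ≤ j
        · obtain ⟨b, rfl⟩ := Nat.exists_eq_add_of_le hj
          have : x ^ i * y ^ (n + b) = x ^ i * y ^ b * y ^ n := by ring
          rw [this]
          exact I.mul_mem_left _ hyI
        · -- now i < n and j < n, with i + j = n + 2 = 2m+3, so i ≥ 3 and j ≥ 1
          have hi3 : 3 ≤ i := by omega
          have hj1 : 1 ≤ j := by omega
          obtain ⟨a, rfl⟩ := Nat.exists_eq_add_of_le hi3
          obtain ⟨b, rfl⟩ := Nat.exists_eq_add_of_le hj1
          have hdecomp : x ^ (3 + a) * y ^ (1 + b) =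
              x ^ a * y ^ b * g + s * (x ^ (2 + a) * y ^ (2 + b))
                + (1 - s) * (x ^ (1 + a) * y ^ (3 + b)) := by
            rw [hgdef]; ring
          rw [hdecomp]
          refine add_mem (add_mem (I.mul_mem_left _ hgI) (I.mul_mem_left _ ?_))
            (I.mul_mem_left _ ?_)
          · exact ih (2 + a) (by omega) (2 + b) (by omega)
          · exact ih (1 + a) (by omega) (3 + b) (by omega)
  -- reduce the power of the span to monomials
  have hmono : ∀ N : ℕ, (({x, y} : Set (MvPolynomial (Fin 3) k)) ^ N) ⊆
      {q | ∃ i j : ℕ, i + j = N ∧ q = x ^ i * y ^ j} := by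
    intro N
    induction N with
    | zero =>
      intro q hq
      rw [pow_zero, Set.mem_one] at hq
      exact ⟨0, 0, rfl, by simp [hq]⟩
    | succ N ihN =>
      intro q hq
      rw [pow_succ] at hq
      rcases Set.mem_mul.mp hq with ⟨a, ha, b, hb, rfl⟩
      obtain ⟨i, j, hij, rfl⟩ := ihN ha
      rcases hb with rfl | rfl
      · exact ⟨i + 1, j, by omega, by ring⟩
      · exact ⟨i, j + 1, by omega, by ring⟩
  calc (Ideal.span {x, y}) ^ (n + 2)
      = Ideal.span (({x, y} : Set (MvPolynomial (Fin 3) k)) ^ (n + 2)) :=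
        Submodule.span_pow _ _
    _ ≤ I := by
        rw [Ideal.span_le]
        intro q hq
        obtain ⟨i, j, hij, rfl⟩ := hmono _ hq
        exact key i j hij
end

section
/- For every monomial $x^i y^j$ with $i+j = n+2$, one has $x^i y^j \in (x^2 y^n, x y^{n+1}, g)$ whenever $1 \leq j \leq n-1$ (so $i \geq 3$), where $g = xy(x-y)(x+y-sy)$. -/
open MvPolynomial

lemma stmt_2_aux (k : Type*) [Field k] (n : ℕ) :
    ∀ i, ∀ j : ℕ, 1 ≤ i → 1 ≤ j → i + j = n + 2 →
    (X 1 : MvPolynomial (Fin 3) k) ^ i * X 2 ^ j ∈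
      Ideal.span {(X 1 : MvPolynomial (Fin 3) k) ^ 2 * X 2 ^ n, X 1 * X 2 ^ (n + 1),
        X 1 * X 2 * (X 1 - X 2) * (X 1 + X 2 - X 0 * X 2)} := by
  intro i
  induction i using Nat.strong_induction_on with
  | _ i ih =>
    intro j hi hj hij
    match i, hi with
    | 1, _ =>
      have hjn : j = n + 1 := by omega
      subst hjn
      rw [pow_one]
      exact Ideal.subset_span (by simp)
    | 2, _ =>
      have hjn : j = n := by omega
      subst hjn
      exact Ideal.subset_span (by simp)
    | (a + 3), _ =>
      obtain ⟨b, rfl⟩ : ∃ b, j = b + 1 := ⟨j - 1, by omega⟩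
      have hg : (X 1 * X 2 * (X 1 - X 2) * (X 1 + X 2 - X 0 * X 2) : MvPolynomial (Fin 3) k)
          ∈ Ideal.span {(X 1 : MvPolynomial (Fin 3) k) ^ 2 * X 2 ^ n, X 1 * X 2 ^ (n + 1),
            X 1 * X 2 * (X 1 - X 2) * (X 1 + X 2 - X 0 * X 2)} :=
        Ideal.subset_span (by simp)
      have key : (X 1 : MvPolynomial (Fin 3) k) ^ (a + 3) * X 2 ^ (b + 1) =
          X 1 ^ a * X 2 ^ b * (X 1 * X 2 * (X 1 - X 2) * (X 1 + X 2 - X 0 * X 2)) +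
          X 0 * (X 1 ^ (a + 2) * X 2 ^ (b + 2)) +
          (1 - X 0) * (X 1 ^ (a + 1) * X 2 ^ (b + 3)) := by ring
      rw [key]
      refine add_mem (add_mem (Ideal.mul_mem_left _ _ hg) (Ideal.mul_mem_left _ _ ?_))
        (Ideal.mul_mem_left _ _ ?_)
      · exact ih (a + 2) (by omega) (b + 2) (by omega) (by omega) (by omega)
      · exact ih (a + 1) (by omega) (b + 3) (by omega) (by omega) (by omega)

/-- For `i + j = n + 2` with `1 ≤ j ≤ n - 1` (so `i ≥ 3`), one has
`x^i y^j ∈ (x^2 y^n, x y^(n+1), g)` in `k[s,x,y]`. -/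
theorem stmt_2 (k : Type*) [Field k] (n : ℕ) (hn : 9 ≤ n) (hodd : Odd n)
    (i j : ℕ) (hij : i + j = n + 2) (hj1 : 1 ≤ j) (hj2 : j ≤ n - 1) :
    (X 1 : MvPolynomial (Fin 3) k) ^ i * X 2 ^ j ∈
      Ideal.span {(X 1 : MvPolynomial (Fin 3) k) ^ 2 * X 2 ^ n, X 1 * X 2 ^ (n + 1),
        X 1 * X 2 * (X 1 - X 2) * (X 1 + X 2 - X 0 * X 2)} := by
  exact stmt_2_aux k n i j (by omega) hj1 hij
end

section
/- The element $s f$ lies in the ideal $(x^n, y^n, g)$ of $k[s,x,y]$, where $f = \sum_{j=2}^{n-1} (-1)^j x^{n+1-j} y^j$ and $g = xy(x-y)(x+y-sy)$. -/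
/-!
Multiplying `f` by `x + y` telescopes: `(x + y) f = x^n y^2 + x^2 y^n` since `n` is odd. Writing
`n = 2m + 1` and `x^(2m) - y^(2m) = (x^2 - y^2) W`, this shows that
`(x^2 - y^2) (s f - y x^n - (s - 1) x y^n + W g) = 0`, and `x^2 - y^2` can be cancelled in the
domain `k[s,x,y]`.
-/

open MvPolynomial

section

variable {σ R : Type*} [CommRing R] [Nontrivial R] {i j : σ}

theorem MvPolynomial.X_add_X_ne_zero (hij : i ≠ j) : (X i + X j : MvPolynomial σ R) ≠ 0 := by
  classical
  intro h
  simpa [hij] using congrArg (eval (Pi.single i 1)) h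

theorem MvPolynomial.X_sub_X_ne_zero (hij : i ≠ j) : (X i - X j : MvPolynomial σ R) ≠ 0 :=
  sub_ne_zero.mpr fun h ↦ hij (X_injective h)

end

section

open Finset

variable {R : Type*} [CommRing R]

theorem add_mul_sum_Icc_alternating (x y : R) {n : ℕ} (hn : 2 ≤ n) :
    (x + y) * ∑ j ∈ Icc 2 (n - 1), (-1) ^ j * x ^ (n + 1 - j) * y ^ j =
      x ^ n * y ^ 2 - (-1) ^ n * x ^ 2 * y ^ n := by
  set a : ℕ → R := fun j ↦ -((-1) ^ j * x ^ (n + 2 - j) * y ^ j)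
  have hIcc : Icc 2 (n - 1) = Ico 2 n := by ext; simp; omega
  calc (x + y) * ∑ j ∈ Icc 2 (n - 1), (-1) ^ j * x ^ (n + 1 - j) * y ^ j
      = ∑ j ∈ Ico 2 n, (a (j + 1) - a j) := by
        rw [hIcc, mul_sum]
        refine sum_congr rfl fun j hj ↦ ?_
        obtain ⟨i, rfl⟩ : ∃ i, n = j + 1 + i := ⟨n - (j + 1), by simp at hj; omega⟩
        simp only [a, show j + 1 + i + 2 - j = i + 3 by omega,
          show j + 1 + i + 2 - (j + 1) = i + 2 by omega, show j + 1 + i + 1 - j = i + 2 by omega]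
        ring
    _ = x ^ n * y ^ 2 - (-1) ^ n * x ^ 2 * y ^ n := by
        rw [sum_Ico_sub a hn]
        simp only [a, show n + 2 - n = 2 by omega, show n + 2 - 2 = n by omega]
        ring

theorem mul_sum_Icc_alternating_mem_span [IsDomain R] (s x y : R) (hadd : x + y ≠ 0)
    (hsub : x - y ≠ 0) {n : ℕ} (hn : Odd n) :
    s * ∑ j ∈ Icc 2 (n - 1), (-1) ^ j * x ^ (n + 1 - j) * y ^ j ∈
      Ideal.span {x ^ n, y ^ n, x * y * (x - y) * (x + y - s * y)} := by
  obtain hn1 | hn2 := Nat.lt_or_ge n 2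
  · simp [Icc_eq_empty (by omega : ¬2 ≤ n - 1)]
  have htel := add_mul_sum_Icc_alternating x y hn2
  rw [hn.neg_one_pow] at htel
  obtain ⟨m, rfl⟩ := hn
  obtain ⟨W, hW⟩ := sub_dvd_pow_sub_pow (x ^ 2) (y ^ 2) m
  refine Submodule.mem_span_triple.mpr ⟨y, (s - 1) * x, -W, ?_⟩
  simp only [smul_eq_mul]
  refine mul_left_cancel₀ (mul_ne_zero hadd hsub) ?_
  linear_combination -(x - y) * s * htel + (x * y * (x - y) * (x + y - s * y)) * hW

end

theorem stmt_4_general (k : Type*) [Field k] (m n : ℕ) (hn : n = 2 * m + 1) :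
    (X 0 : MvPolynomial (Fin 3) k) *
        (∑ j ∈ Finset.Icc 2 (n - 1),
          (-1 : MvPolynomial (Fin 3) k) ^ j * X 1 ^ (n + 1 - j) * X 2 ^ j) ∈
      Ideal.span {(X 1 : MvPolynomial (Fin 3) k) ^ n, X 2 ^ n,
        X 1 * X 2 * (X 1 - X 2) * (X 1 + X 2 - X 0 * X 2)} :=
  mul_sum_Icc_alternating_mem_span _ _ _ (X_add_X_ne_zero (by decide))
    (X_sub_X_ne_zero (by decide)) ⟨m, hn⟩

/-- `s f ∈ (x^n, y^n, g)` where `f = ∑_{j=2}^{n-1} (-1)^j x^(n+1-j) y^j`. -/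
theorem stmt_4 (k : Type*) [Field k] (m n : ℕ) (hm : 4 ≤ m) (hn : n = 2 * m + 1) :
    (X 0 : MvPolynomial (Fin 3) k) *
        (∑ j ∈ Finset.Icc 2 (n - 1),
          (-1 : MvPolynomial (Fin 3) k) ^ j * X 1 ^ (n + 1 - j) * X 2 ^ j) ∈
      Ideal.span {(X 1 : MvPolynomial (Fin 3) k) ^ n, X 2 ^ n,
        X 1 * X 2 * (X 1 - X 2) * (X 1 + X 2 - X 0 * X 2)} :=
  stmt_4_general k m n hn
end

section
/- Setting $t = s - 1$, for all integers $i \geq 1$, $a \geq 1$, $b \geq i+1$, one has $t^i x^a y^b (x-y) \equiv x^{a+i} y^{b-i}(x-y)$ modulo $g = xy(x-y)(x+y-sy)$ in $k[s,x,y]$. -/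
open MvPolynomial

lemma aux_stmt_5 (k : Type*) [Field k] (i : ℕ) : ∀ a c : ℕ,
    ((X 0 : MvPolynomial (Fin 3) k) - 1) ^ i * X 1 ^ (a + 1) * X 2 ^ (c + i + 1) *
        (X 1 - X 2) - X 1 ^ (a + 1 + i) * X 2 ^ (c + 1) * (X 1 - X 2) ∈
      Ideal.span {(X 1 : MvPolynomial (Fin 3) k) * X 2 * (X 1 - X 2) *
        (X 1 + X 2 - X 0 * X 2)} := by
  induction i with
  | zero => intro a c; simp
  | succ n ih =>
    intro a c
    have h1 := ih a (c + 1)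
    have hg : ((X 1 : MvPolynomial (Fin 3) k) * X 2 * (X 1 - X 2) *
        (X 1 + X 2 - X 0 * X 2)) ∈
        Ideal.span {(X 1 : MvPolynomial (Fin 3) k) * X 2 * (X 1 - X 2) *
        (X 1 + X 2 - X 0 * X 2)} := Ideal.subset_span rfl
    have key : ((X 0 : MvPolynomial (Fin 3) k) - 1) ^ (n + 1) * X 1 ^ (a + 1) *
        X 2 ^ (c + (n + 1) + 1) * (X 1 - X 2) -
        X 1 ^ (a + 1 + (n + 1)) * X 2 ^ (c + 1) * (X 1 - X 2)
        = ((X 0 : MvPolynomial (Fin 3) k) - 1) *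
          (((X 0 : MvPolynomial (Fin 3) k) - 1) ^ n * X 1 ^ (a + 1) *
            X 2 ^ (c + 1 + n + 1) * (X 1 - X 2) -
            X 1 ^ (a + 1 + n) * X 2 ^ (c + 1 + 1) * (X 1 - X 2))
          + (-(X 1 ^ (a + n) * X 2 ^ c)) *
            ((X 1 : MvPolynomial (Fin 3) k) * X 2 * (X 1 - X 2) *
              (X 1 + X 2 - X 0 * X 2)) := by ring
    rw [key]
    exact add_mem (Ideal.mul_mem_left _ _ h1) (Ideal.mul_mem_left _ _ hg)

/-- With `t = s - 1`, for all `i ≥ 1`, `a ≥ 1`, `b ≥ i + 1`, one has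
`t^i x^a y^b (x-y) ≡ x^(a+i) y^(b-i) (x-y)` modulo `g`. -/
theorem stmt_5 (k : Type*) [Field k] (i a b : ℕ) (hi : 1 ≤ i) (ha : 1 ≤ a)
    (hb : i + 1 ≤ b) :
    ((X 0 : MvPolynomial (Fin 3) k) - 1) ^ i * X 1 ^ a * X 2 ^ b * (X 1 - X 2) -
        X 1 ^ (a + i) * X 2 ^ (b - i) * (X 1 - X 2) ∈
      Ideal.span {(X 1 : MvPolynomial (Fin 3) k) * X 2 * (X 1 - X 2) *
        (X 1 + X 2 - X 0 * X 2)} := by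
  obtain ⟨a', rfl⟩ : ∃ a', a = a' + 1 := ⟨a - 1, by omega⟩
  obtain ⟨c, rfl⟩ : ∃ c, b = c + i + 1 := ⟨b - i - 1, by omega⟩
  have : c + i + 1 - i = c + 1 := by omega
  rw [this]
  exact aux_stmt_5 k i a' c
end

section
/- Both $x f$ and $y f$ lie in the ideal $(x^n, y^n, g)$ of $k[s,x,y]$, where $f = \sum_{j=2}^{n-1} (-1)^j x^{n+1-j} y^j$ and $g = xy(x-y)(x+y-sy)$. Hence the maximal ideal $(s,x,y)$ is contained in the colon ideal $((x^n,y^n,g) : f)$. -/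
/-! Pairing consecutive terms gives `f = x y^(2m+1) + y h q` with `h = x y (x - y)` and
`q = ∑ i < m, (y²)^i (x²)^(m-1-i)`, so that `(x² - y²) q = x^(2m) - y^(2m)`.
Since `g = h (x + y - s y)`, modulo `g` we have `h x ≡ (s - 1) h y`; hence `h` times any monomial
of degree `≥ 2m` lies in `(y^n, g)`, which handles `x f` and `y f`. For `s f`, replace `s h y` by
`h (x + y) - g`: then `h (x + y) q = x y (x^(2m) - y^(2m))` lies in `(x^n, y^n)`. -/

open MvPolynomial Finset

section

variable {R : Type*} [CommRing R]

def alternatingSum (x y : R) (n : ℕ) : R :=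
  ∑ j ∈ Icc 2 (n - 1), (-1) ^ j * x ^ (n + 1 - j) * y ^ j

lemma alternatingSum_two_mul_add_three (x y : R) {m : ℕ} (hm : 1 ≤ m) :
    alternatingSum x y (2 * m + 3) =
      x ^ 2 * alternatingSum x y (2 * m + 1) - x ^ 3 * y ^ (2 * m + 1) + x ^ 2 * y ^ (2 * m + 2) := by
  have hshift : ∑ j ∈ Icc 2 (2 * m), (-1 : R) ^ j * x ^ (2 * m + 4 - j) * y ^ j =
      x ^ 2 * alternatingSum x y (2 * m + 1) := by
    rw [alternatingSum, mul_sum]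
    refine sum_congr rfl fun j hj => ?_
    rw [show 2 * m + 4 - j = (2 * m + 1 + 1 - j) + 2 by grind, pow_add]
    ring
  rw [alternatingSum, show 2 * m + 3 - 1 = 2 * m + 1 + 1 from rfl,
    sum_Icc_succ_top (by omega), sum_Icc_succ_top (by omega), hshift]
  simp only [(by omega : 2 * m + 3 + 1 - (2 * m + 1) = 3),
    (by omega : 2 * m + 3 + 1 - (2 * m + 1 + 1) = 2),
    pow_succ (-1 : R) (2 * m + 1), Odd.neg_one_pow (odd_two_mul_add_one m)]
  ring

lemma alternatingSum_two_mul_add_one (x y : R) {m : ℕ} (hm : 1 ≤ m) :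
    alternatingSum x y (2 * m + 1) =
      x * y ^ 2 * (x - y) * ∑ i ∈ range m, (y ^ 2) ^ i * (x ^ 2) ^ (m - 1 - i) +
        x * y ^ (2 * m + 1) := by
  induction m, hm using Nat.le_induction with
  | base =>
    rw [alternatingSum, Nat.add_sub_cancel, Icc_self, sum_singleton, range_one, sum_singleton]
    ring
  | succ m hm ih =>
    rw [show 2 * (m + 1) + 1 = 2 * m + 3 by ring, alternatingSum_two_mul_add_three x y hm, ih,
      Nat.add_sub_cancel, geom_sum₂_succ_eq]
    ring

variable {s x y : R} {I : Ideal R}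

lemma mul_pow_mul_pow_mem {N : ℕ} (hy : y ^ (N + 1) ∈ I)
    (hg : x * y * (x - y) * (x + y - s * y) ∈ I) {a b : ℕ} (hab : N ≤ a + b) :
    x * y * (x - y) * (x ^ a * y ^ b) ∈ I := by
  induction a generalizing b with
  | zero =>
    rw [show x * y * (x - y) * (x ^ 0 * y ^ b) = x * (x - y) * y ^ (b + 1) by ring]
    exact I.mul_mem_left _ (I.pow_mem_of_pow_mem hy (by omega))
  | succ a ih =>
    rw [show x * y * (x - y) * (x ^ (a + 1) * y ^ b) =
      (s - 1) * (x * y * (x - y) * (x ^ a * y ^ (b + 1))) +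
        x ^ a * y ^ b * (x * y * (x - y) * (x + y - s * y)) by ring]
    exact add_mem (I.mul_mem_left _ (ih (by omega))) (I.mul_mem_left _ hg)

lemma mul_pow_mul_pow_mul_geomSum_mem {m : ℕ} (hy : y ^ (2 * m + 1) ∈ I)
    (hg : x * y * (x - y) * (x + y - s * y) ∈ I) {a b : ℕ} (hab : 2 ≤ a + b) :
    x * y * (x - y) * (x ^ a * y ^ b * ∑ i ∈ range m, (y ^ 2) ^ i * (x ^ 2) ^ (m - 1 - i)) ∈ I := by
  rw [mul_sum, mul_sum]
  refine sum_mem fun i hi => ?_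
  rw [show x ^ a * y ^ b * ((y ^ 2) ^ i * (x ^ 2) ^ (m - 1 - i)) =
    x ^ (a + 2 * (m - 1 - i)) * y ^ (b + 2 * i) by ring]
  exact mul_pow_mul_pow_mem hy hg (by grind)

lemma x_mul_alternatingSum_mem {m : ℕ} (hm : 1 ≤ m) (hy : y ^ (2 * m + 1) ∈ I)
    (hg : x * y * (x - y) * (x + y - s * y) ∈ I) : x * alternatingSum x y (2 * m + 1) ∈ I := by
  rw [alternatingSum_two_mul_add_one x y hm]
  have := mul_pow_mul_pow_mul_geomSum_mem (a := 1) (b := 1) hy hg le_rfl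
  convert add_mem this (I.mul_mem_left (x ^ 2) hy) using 1
  ring

lemma y_mul_alternatingSum_mem {m : ℕ} (hm : 1 ≤ m) (hy : y ^ (2 * m + 1) ∈ I)
    (hg : x * y * (x - y) * (x + y - s * y) ∈ I) : y * alternatingSum x y (2 * m + 1) ∈ I := by
  rw [alternatingSum_two_mul_add_one x y hm]
  have := mul_pow_mul_pow_mul_geomSum_mem (a := 0) (b := 2) hy hg le_rfl
  convert add_mem this (I.mul_mem_left (x * y) hy) using 1
  ring

lemma s_mul_alternatingSum_mem {m : ℕ} (hm : 1 ≤ m) (hx : x ^ (2 * m + 1) ∈ I)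
    (hy : y ^ (2 * m + 1) ∈ I) (hg : x * y * (x - y) * (x + y - s * y) ∈ I) :
    s * alternatingSum x y (2 * m + 1) ∈ I := by
  set q := ∑ i ∈ range m, (y ^ 2) ^ i * (x ^ 2) ^ (m - 1 - i)
  have hq : q * (y ^ 2 - x ^ 2) = (y ^ 2) ^ m - (x ^ 2) ^ m := geom_sum₂_mul _ _ m
  have hsf : s * alternatingSum x y (2 * m + 1) = y * x ^ (2 * m + 1) +
      (s - 1) * x * y ^ (2 * m + 1) - q * (x * y * (x - y) * (x + y - s * y)) := by
    rw [alternatingSum_two_mul_add_one x y hm]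
    linear_combination (-(x * y)) * hq
  rw [hsf]
  exact sub_mem (add_mem (I.mul_mem_left _ hx) (I.mul_mem_left _ hy)) (I.mul_mem_left _ hg)

end

theorem stmt_6_general (k : Type*) [Field k] (m n : ℕ) (hm : 4 ≤ m)
    (hn : n = 2 * m + 1) :
    (X 1 : MvPolynomial (Fin 3) k) *
        (∑ j ∈ Finset.Icc 2 (n - 1),
          (-1 : MvPolynomial (Fin 3) k) ^ j * X 1 ^ (n + 1 - j) * X 2 ^ j) ∈
      Ideal.span {(X 1 : MvPolynomial (Fin 3) k) ^ n, X 2 ^ n,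
        X 1 * X 2 * (X 1 - X 2) * (X 1 + X 2 - X 0 * X 2)} ∧
    (X 2 : MvPolynomial (Fin 3) k) *
        (∑ j ∈ Finset.Icc 2 (n - 1),
          (-1 : MvPolynomial (Fin 3) k) ^ j * X 1 ^ (n + 1 - j) * X 2 ^ j) ∈
      Ideal.span {(X 1 : MvPolynomial (Fin 3) k) ^ n, X 2 ^ n,
        X 1 * X 2 * (X 1 - X 2) * (X 1 + X 2 - X 0 * X 2)} ∧
    Ideal.span {(X 0 : MvPolynomial (Fin 3) k), X 1, X 2} ≤
      Submodule.colon
        (Ideal.span {(X 1 : MvPolynomial (Fin 3) k) ^ n, X 2 ^ n,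
          X 1 * X 2 * (X 1 - X 2) * (X 1 + X 2 - X 0 * X 2)})
        (Ideal.span {∑ j ∈ Finset.Icc 2 (n - 1),
          (-1 : MvPolynomial (Fin 3) k) ^ j * X 1 ^ (n + 1 - j) * X 2 ^ j}) := by
  subst hn
  have hm_pos : 1 ≤ m := by omega
  set I : Ideal (MvPolynomial (Fin 3) k) := Ideal.span {X 1 ^ (2 * m + 1), X 2 ^ (2 * m + 1),
    X 1 * X 2 * (X 1 - X 2) * (X 1 + X 2 - X 0 * X 2)}
  have hx : X 1 ^ (2 * m + 1) ∈ I := Ideal.subset_span (by simp)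
  have hy : X 2 ^ (2 * m + 1) ∈ I := Ideal.subset_span (by simp)
  have hg : X 1 * X 2 * (X 1 - X 2) * (X 1 + X 2 - X 0 * X 2) ∈ I := Ideal.subset_span (by simp)
  have hxf := x_mul_alternatingSum_mem hm_pos hy hg
  have hyf := y_mul_alternatingSum_mem hm_pos hy hg
  have hsf := s_mul_alternatingSum_mem hm_pos hx hy hg
  refine ⟨hxf, hyf, ?_⟩
  simp only [Ideal.span_le, Set.insert_subset_iff, Set.singleton_subset_iff,
    SetLike.mem_coe, Submodule.mem_colon_span_singleton, smul_eq_mul]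
  exact ⟨hsf, hxf, hyf⟩

/-- Both `x f` and `y f` lie in `(x^n, y^n, g)`; hence `(s,x,y) ⊆ ((x^n,y^n,g) : f)`. -/
theorem stmt_6 (k : Type*) [Field k] (m n : ℕ) (hm : 4 ≤ m) (hchar : (m : k) ≠ 0)
    (hn : n = 2 * m + 1) :
    (X 1 : MvPolynomial (Fin 3) k) *
        (∑ j ∈ Finset.Icc 2 (n - 1),
          (-1 : MvPolynomial (Fin 3) k) ^ j * X 1 ^ (n + 1 - j) * X 2 ^ j) ∈
      Ideal.span {(X 1 : MvPolynomial (Fin 3) k) ^ n, X 2 ^ n,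
        X 1 * X 2 * (X 1 - X 2) * (X 1 + X 2 - X 0 * X 2)} ∧
    (X 2 : MvPolynomial (Fin 3) k) *
        (∑ j ∈ Finset.Icc 2 (n - 1),
          (-1 : MvPolynomial (Fin 3) k) ^ j * X 1 ^ (n + 1 - j) * X 2 ^ j) ∈
      Ideal.span {(X 1 : MvPolynomial (Fin 3) k) ^ n, X 2 ^ n,
        X 1 * X 2 * (X 1 - X 2) * (X 1 + X 2 - X 0 * X 2)} ∧
    Ideal.span {(X 0 : MvPolynomial (Fin 3) k), X 1, X 2} ≤
      Submodule.colon
        (Ideal.span {(X 1 : MvPolynomial (Fin 3) k) ^ n, X 2 ^ n,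
          X 1 * X 2 * (X 1 - X 2) * (X 1 + X 2 - X 0 * X 2)})
        (Ideal.span {∑ j ∈ Finset.Icc 2 (n - 1),
          (-1 : MvPolynomial (Fin 3) k) ^ j * X 1 ^ (n + 1 - j) * X 2 ^ j}) :=
  stmt_6_general k m n hm hn
end

section
/- The set $G = \{g, x^n, x^{n-1}y^3, x^{n-2}y^4, \ldots, x^3 y^{n-1}, y^n\}$ generates the ideal $(x^n, y^n, g)$ of $k[s,x,y]$, where $g = xy(x-y)(x+y-sy)$. -/
open MvPolynomial

lemma stmt_8_key (k : Type*) [Field k] (n : ℕ) (hn : 9 ≤ n) :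
    ∀ a b : ℕ, a + b = n + 2 →
    (X 1 : MvPolynomial (Fin 3) k) ^ a * X 2 ^ b ∈
      Ideal.span {(X 1 : MvPolynomial (Fin 3) k) ^ n, X 2 ^ n,
        X 1 * X 2 * (X 1 - X 2) * (X 1 + X 2 - X 0 * X 2)} := by
  intro a
  induction a using Nat.strong_induction_on with
  | _ a ih =>
    intro b hab
    by_cases ha2 : a ≤ 2
    · obtain ⟨e, rfl⟩ : ∃ e, b = e + n := ⟨b - n, by omega⟩
      rw [pow_add, ← mul_assoc]
      exact Ideal.mul_mem_left _ _ (Ideal.subset_span (by simp))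
    · by_cases han : n ≤ a
      · obtain ⟨e, rfl⟩ : ∃ e, a = e + n := ⟨a - n, by omega⟩
        rw [pow_add]
        exact Ideal.mul_mem_right _ _ (Ideal.mul_mem_left _ _ (Ideal.subset_span (by simp)))
      · obtain ⟨c, rfl⟩ : ∃ c, a = c + 3 := ⟨a - 3, by omega⟩
        obtain ⟨d, rfl⟩ : ∃ d, b = d + 1 := ⟨b - 1, by omega⟩
        have hid : (X 1 : MvPolynomial (Fin 3) k) ^ (c + 3) * X 2 ^ (d + 1) =
            X 1 ^ c * X 2 ^ d * (X 1 * X 2 * (X 1 - X 2) * (X 1 + X 2 - X 0 * X 2))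
            + X 1 ^ (c + 1) * X 2 ^ (d + 3)
            + X 0 * (X 1 ^ (c + 2) * X 2 ^ (d + 2))
            - X 0 * (X 1 ^ (c + 1) * X 2 ^ (d + 3)) := by ring
        rw [hid]
        have h1 := ih (c + 1) (by omega) (d + 3) (by omega)
        have h2 := ih (c + 2) (by omega) (d + 2) (by omega)
        have hg : (X 1 : MvPolynomial (Fin 3) k) ^ c * X 2 ^ d *
            (X 1 * X 2 * (X 1 - X 2) * (X 1 + X 2 - X 0 * X 2)) ∈
            Ideal.span {(X 1 : MvPolynomial (Fin 3) k) ^ n, X 2 ^ n,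
              X 1 * X 2 * (X 1 - X 2) * (X 1 + X 2 - X 0 * X 2)} :=
          Ideal.mul_mem_left _ _ (Ideal.subset_span (by simp))
        exact Ideal.sub_mem _
          (Ideal.add_mem _ (Ideal.add_mem _ hg h1) (Ideal.mul_mem_left _ _ h2))
          (Ideal.mul_mem_left _ _ h1)

/-- The set `G = {g, x^n, y^n} ∪ {x^i y^(n+2-i) : 3 ≤ i ≤ n-1}` generates `(x^n, y^n, g)`. -/
theorem stmt_8 (k : Type*) [Field k] (m n : ℕ) (hm : 4 ≤ m) (hn : n = 2 * m + 1) :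
    Ideal.span
        ({(X 1 : MvPolynomial (Fin 3) k) * X 2 * (X 1 - X 2) * (X 1 + X 2 - X 0 * X 2),
            X 1 ^ n, X 2 ^ n} ∪
          (fun i => (X 1 : MvPolynomial (Fin 3) k) ^ i * X 2 ^ (n + 2 - i)) ''
            Set.Icc 3 (n - 1)) =
      Ideal.span {(X 1 : MvPolynomial (Fin 3) k) ^ n, X 2 ^ n,
        X 1 * X 2 * (X 1 - X 2) * (X 1 + X 2 - X 0 * X 2)} := by
  have hn9 : 9 ≤ n := by omega
  apply le_antisymm
  · rw [Ideal.span_le]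
    rintro p hp
    simp only [Set.mem_union, Set.mem_insert_iff, Set.mem_singleton_iff, Set.mem_image,
      Set.mem_Icc] at hp
    rcases hp with (rfl | rfl | rfl) | ⟨i, ⟨hi3, hin⟩, rfl⟩
    · exact Ideal.subset_span (by simp)
    · exact Ideal.subset_span (by simp)
    · exact Ideal.subset_span (by simp)
    · exact stmt_8_key k n hn9 i (n + 2 - i) (by omega)
  · rw [Ideal.span_le]
    rintro p hp
    simp only [Set.mem_insert_iff, Set.mem_singleton_iff] at hp
    rcases hp with rfl | rfl | rfl
    · exact Ideal.subset_span (by simp)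
    · exact Ideal.subset_span (by simp)
    · exact Ideal.subset_span (by simp)
end

section
/- The polynomial $f = \sum_{j=2}^{n-1} (-1)^j x^{n+1-j} y^j$ does not belong to the ideal $(x^n, y^n, g)$ of $k[s,x,y]$, where $g = xy(x-y)(x+y-sy)$. Consequently, the colon ideal $((x^n,y^n,g) : f)$ equals the maximal ideal $(s,x,y)$. -/
/-!
Write `w = x y (x - y)`, so that `g = w (x + y - s y)`. Modulo `g` we have `w x ≡ (s - 1) w y`,
hence `w x^j y^l ∈ (g, y^(j+l+1))`; as `x^2 y = w + x y^2`, every monomial `x^a y^b` of degree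
`≥ n + 2` can then be slid to `y^(a+b)` inside `I = (x^n, y^n, g)`, so `x f, y f ∈ I`. For `s`, an
induction on `m` gives `s f ≡ x^n y + (s - 1) x y^n` modulo `g`. Thus `(s, x, y) ⊆ (I : f)`, with
equality by maximality once `f ∉ I`.

For `f ∉ I`, write `m = e + 1` and let `L` sum the coefficients of the `s`-free monomials
`x^(2i+2) y^(2j+2)` with `i + j = e`. None of these monomials occurs in a multiple of `s`, `x^n`
or `y^n`, and `L (q x^2) = L (q y^2)` whenever `x y ∣ q`, because multiplying by `x^2` or by `y^2`
shifts the summation range by one; as `g ≡ x y (x^2 - y^2)` modulo `s`, `L` vanishes on `I`.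
But `L f = m ≠ 0`.
-/

open MvPolynomial Finset

theorem Ideal.addMonoidHom_eq_zero_of_mem_span {R M : Type*} [CommSemiring R] [AddCommMonoid M]
    (φ : R →+ M) {S : Set R} (hS : ∀ p, ∀ a ∈ S, φ (p * a) = 0) {z : R}
    (hz : z ∈ Ideal.span S) : φ z = 0 := by
  suffices ∀ p, φ (p * z) = 0 by simpa using this 1
  induction hz using Submodule.span_induction with
  | mem a ha => exact fun p => hS p a ha
  | zero => simp
  | add a b _ _ ha hb => exact fun p => by rw [mul_add, map_add, ha, hb, add_zero]
  | smul c a _ ha => exact fun p => by rw [smul_eq_mul, ← mul_assoc, ha]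

namespace MvPolynomial

theorem idealOfVars_isMaximal (σ K : Type*) [Field K] : (idealOfVars σ K).IsMaximal := by
  have : idealOfVars σ K = RingHom.ker (constantCoeff (σ := σ) (R := K)) := by
    ext p
    rw [RingHom.mem_ker, ← pow_one (idealOfVars σ K), mem_pow_idealOfVars_iff']
    simp [Finsupp.degree_eq_zero_iff, constantCoeff_eq]
  rw [this]
  exact RingHom.ker_isMaximal_of_surjective _ fun r => ⟨C r, constantCoeff_C _ _⟩

theorem span_X_fin_three_eq_idealOfVars (K : Type*) [CommRing K] :
    Ideal.span {(X 0 : MvPolynomial (Fin 3) K), X 1, X 2} = idealOfVars (Fin 3) K := by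
  congr 1
  ext p
  simp [Fin.exists_fin_succ, eq_comm]

end MvPolynomial

namespace SocleColon

section CommRing

variable {R : Type*} [CommRing R] (s x y : R)

def quartic : R := x * y * (x - y) * (x + y - s * y)

def altSum (n : ℕ) : R := ∑ j ∈ Icc 2 (n - 1), (-1) ^ j * x ^ (n + 1 - j) * y ^ j

def gensIdeal (n : ℕ) : Ideal R := Ideal.span {x ^ n, y ^ n, quartic s x y}

theorem mul_pow_mul_pow_mem_span_quartic (j l : ℕ) :
    x * y * (x - y) * x ^ j * y ^ l ∈ Ideal.span {quartic s x y, y ^ (j + l + 1)} := by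
  induction j generalizing l with
  | zero =>
    rw [show x * y * (x - y) * x ^ 0 * y ^ l = x * (x - y) * y ^ (0 + l + 1) by ring]
    exact Ideal.mul_mem_left _ _ (Ideal.subset_span (by simp))
  | succ j ih =>
    -- modulo `quartic s x y`, `x * y * (x - y) * x ≡ (s - 1) * (x * y * (x - y) * y)`
    have h : x * y * (x - y) * x ^ (j + 1) * y ^ l
        = x ^ j * y ^ l * quartic s x y + (s - 1) * (x * y * (x - y) * x ^ j * y ^ (l + 1)) := by
      unfold quartic; ring
    rw [h, show j + 1 + l + 1 = j + (l + 1) + 1 by omega]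
    exact Ideal.add_mem _ (Ideal.mul_mem_left _ _ (Ideal.subset_span (by simp)))
      (Ideal.mul_mem_left _ _ (ih (l + 1)))

variable {x y} in
theorem pow_mem_gensIdeal_of_le {n a : ℕ} (h : n ≤ a) :
    x ^ a ∈ gensIdeal s x y n ∧ y ^ a ∈ gensIdeal s x y n :=
  ⟨Ideal.pow_mem_of_pow_mem _ (Ideal.subset_span (by simp)) h,
    Ideal.pow_mem_of_pow_mem _ (Ideal.subset_span (by simp)) h⟩

theorem pow_mul_pow_mem_gensIdeal {n a b : ℕ} (h : n + 2 ≤ a + b) :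
    x ^ a * y ^ b ∈ gensIdeal s x y n := by
  induction a generalizing b with
  | zero => simpa using (pow_mem_gensIdeal_of_le s (by omega : n ≤ b)).2
  | succ a ih =>
    by_cases ha : n ≤ a + 1
    · exact Ideal.mul_mem_right _ _ (pow_mem_gensIdeal_of_le s ha).1
    by_cases hb : n ≤ b
    · exact Ideal.mul_mem_left _ _ (pow_mem_gensIdeal_of_le s hb).2
    obtain ⟨a, rfl⟩ : ∃ a', a = a' + 1 := ⟨a - 1, by omega⟩
    obtain ⟨b, rfl⟩ : ∃ b', b = b' + 1 := ⟨b - 1, by omega⟩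
    rw [show x ^ (a + 1 + 1) * y ^ (b + 1)
        = x * y * (x - y) * x ^ a * y ^ b + x ^ (a + 1) * y ^ (b + 1 + 1) by ring]
    refine Ideal.add_mem _ ?_ (ih (by omega))
    refine Ideal.span_le.mpr ?_ (mul_pow_mul_pow_mem_span_quartic s x y a b)
    rintro z (rfl | rfl)
    · exact Ideal.subset_span (by simp)
    · exact (pow_mem_gensIdeal_of_le s (by omega)).2

theorem pow_mul_pow_mul_altSum_mem {n a b : ℕ} (h : 1 ≤ a + b) :
    x ^ a * y ^ b * altSum x y n ∈ gensIdeal s x y n := by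
  rw [altSum, mul_sum]
  refine sum_mem fun j hj => ?_
  rw [mem_Icc] at hj
  rw [show x ^ a * y ^ b * ((-1) ^ j * x ^ (n + 1 - j) * y ^ j)
      = (-1) ^ j * (x ^ (a + (n + 1 - j)) * y ^ (b + j)) by ring]
  exact Ideal.mul_mem_left _ _ (pow_mul_pow_mem_gensIdeal s x y (by omega))

theorem altSum_add_two {n : ℕ} (hn : 2 ≤ n) :
    altSum x y (n + 2) = x ^ 2 * altSum x y n + (-1) ^ n * x ^ 2 * y ^ n * (x - y) := by
  obtain ⟨n, rfl⟩ : ∃ n', n = n' + 1 := ⟨n - 1, by omega⟩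
  simp only [altSum, Nat.add_sub_cancel, show n + 1 + 2 - 1 = n + 1 + 1 by omega]
  rw [sum_Icc_succ_top (by omega), sum_Icc_succ_top (by omega), mul_sum, add_assoc]
  congr 1
  · refine sum_congr rfl fun j hj => ?_
    rw [mem_Icc] at hj
    rw [show n + 1 + 2 + 1 - j = n + 1 + 1 - j + 2 by omega]
    ring
  · rw [show n + 1 + 2 + 1 - (n + 1) = 3 by omega, show n + 1 + 2 + 1 - (n + 1 + 1) = 2 by omega]
    ring

theorem quartic_dvd_mul_altSum_sub (m : ℕ) :
    quartic s x y ∣ s * altSum x y (2 * m + 3)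
      - (x ^ (2 * m + 3) * y + (s - 1) * x * y ^ (2 * m + 3)) := by
  induction m with
  | zero =>
    refine ⟨-1, ?_⟩
    rw [show altSum x y (2 * 0 + 3) = x ^ 2 * y ^ 2 by simp [altSum]]
    unfold quartic
    ring
  | succ m ih =>
    have h : s * altSum x y (2 * (m + 1) + 3)
          - (x ^ (2 * (m + 1) + 3) * y + (s - 1) * x * y ^ (2 * (m + 1) + 3))
        = x ^ 2 * (s * altSum x y (2 * m + 3)
            - (x ^ (2 * m + 3) * y + (s - 1) * x * y ^ (2 * m + 3)))
          - y ^ (2 * m + 2) * quartic s x y := by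
      rw [show 2 * (m + 1) + 3 = 2 * m + 3 + 2 by ring, altSum_add_two x y (by omega),
        Odd.neg_one_pow ⟨m + 1, by ring⟩]
      unfold quartic
      ring
    rw [h]
    exact (dvd_mul_of_dvd_right ih _).sub (dvd_mul_left _ _)

theorem mul_altSum_mem (m : ℕ) : s * altSum x y (2 * m + 3) ∈ gensIdeal s x y (2 * m + 3) := by
  rw [← sub_add_cancel (s * altSum x y _) (x ^ (2 * m + 3) * y + (s - 1) * x * y ^ (2 * m + 3))]
  refine Ideal.add_mem _ ?_ (Ideal.add_mem _ ?_ ?_)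
  · obtain ⟨c, hc⟩ := quartic_dvd_mul_altSum_sub s x y m
    rw [hc]
    exact Ideal.mul_mem_right _ _ (Ideal.subset_span (by simp))
  · exact Ideal.mul_mem_right _ _ (Ideal.subset_span (by simp))
  · exact Ideal.mul_mem_left _ _ (Ideal.subset_span (by simp))

theorem span_le_colon_altSum (m : ℕ) :
    Ideal.span {s, x, y} ≤
      (gensIdeal s x y (2 * m + 3)).colon (Ideal.span {altSum x y (2 * m + 3)}) := by
  rw [Ideal.span_le]
  rintro z (rfl | rfl | rfl) <;> rw [SetLike.mem_coe, Ideal.mem_colon_span_singleton]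
  · exact mul_altSum_mem z x y m
  · simpa using pow_mul_pow_mul_altSum_mem s z y (a := 1) (b := 0) (n := 2 * m + 3) le_rfl
  · simpa using pow_mul_pow_mul_altSum_mem s x z (a := 0) (b := 1) (n := 2 * m + 3) le_rfl

end CommRing

section Polynomial

variable {R : Type*} [CommRing R]

noncomputable def expXY (a b : ℕ) : Fin 3 →₀ ℕ := Finsupp.single 1 a + Finsupp.single 2 b

theorem expXY_injective {a b c d : ℕ} (h : expXY a b = expXY c d) : a = c ∧ b = d :=
  ⟨by simpa [expXY] using DFunLike.congr_fun h 1, by simpa [expXY] using DFunLike.congr_fun h 2⟩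

theorem C_mul_X_pow_mul_X_pow (r : R) (a b : ℕ) :
    C r * X 1 ^ a * X 2 ^ b = monomial (expXY a b) r := by
  simp only [X_pow_eq_monomial, C_mul_monomial, monomial_mul, mul_one, expXY]

theorem coeff_expXY_X_zero_mul (a b : ℕ) (p : MvPolynomial (Fin 3) R) :
    coeff (expXY a b) (X 0 * p) = 0 := by
  rw [coeff_X_mul', if_neg]
  simp [expXY]

theorem coeff_expXY_mul_X_one_pow (a b c : ℕ) (p : MvPolynomial (Fin 3) R) :
    coeff (expXY a b) (p * X 1 ^ c) = if c ≤ a then coeff (expXY (a - c) b) p else 0 := by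
  rw [X_pow_eq_monomial, coeff_mul_monomial', mul_one]
  congr 1
  · simp [expXY, Finsupp.single_le_iff]
  · congr 1; ext i; fin_cases i <;> simp [expXY]

theorem coeff_expXY_mul_X_two_pow (a b c : ℕ) (p : MvPolynomial (Fin 3) R) :
    coeff (expXY a b) (p * X 2 ^ c) = if c ≤ b then coeff (expXY a (b - c)) p else 0 := by
  rw [X_pow_eq_monomial, coeff_mul_monomial', mul_one]
  congr 1
  · simp [expXY, Finsupp.single_le_iff]
  · congr 1; ext i; fin_cases i <;> simp [expXY]

noncomputable def evenCoeffSum (e : ℕ) : MvPolynomial (Fin 3) R →ₗ[R] R :=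
  ∑ ij ∈ antidiagonal e, lcoeff R (expXY (2 * ij.1 + 2) (2 * ij.2 + 2))

theorem evenCoeffSum_apply (e : ℕ) (p : MvPolynomial (Fin 3) R) :
    evenCoeffSum e p = ∑ ij ∈ antidiagonal e, coeff (expXY (2 * ij.1 + 2) (2 * ij.2 + 2)) p := by
  simp [evenCoeffSum]

theorem evenCoeffSum_mul_X_one_pow {e n : ℕ} (hn : 2 * e + 2 < n) (p : MvPolynomial (Fin 3) R) :
    evenCoeffSum e (p * X 1 ^ n) = 0 := by
  rw [evenCoeffSum_apply]
  refine sum_eq_zero fun ij hij => ?_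
  rw [HasAntidiagonal.mem_antidiagonal] at hij
  rw [coeff_expXY_mul_X_one_pow, if_neg (by omega)]

theorem evenCoeffSum_mul_X_two_pow {e n : ℕ} (hn : 2 * e + 2 < n) (p : MvPolynomial (Fin 3) R) :
    evenCoeffSum e (p * X 2 ^ n) = 0 := by
  rw [evenCoeffSum_apply]
  refine sum_eq_zero fun ij hij => ?_
  rw [HasAntidiagonal.mem_antidiagonal] at hij
  rw [coeff_expXY_mul_X_two_pow, if_neg (by omega)]

theorem evenCoeffSum_X_zero_mul (e : ℕ) (p : MvPolynomial (Fin 3) R) :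
    evenCoeffSum e (X 0 * p) = 0 := by
  simp [evenCoeffSum_apply, coeff_expXY_X_zero_mul]

theorem evenCoeffSum_mul_X_one_sq (e : ℕ) (p : MvPolynomial (Fin 3) R) :
    evenCoeffSum e (p * X 1 * X 2 * X 1 ^ 2) = evenCoeffSum e (p * X 1 * X 2 * X 2 ^ 2) := by
  set F : ℕ × ℕ → R := fun ij => coeff (expXY (2 * ij.1) (2 * ij.2)) (p * X 1 * X 2)
  have hx : evenCoeffSum e (p * X 1 * X 2 * X 1 ^ 2)
      = ∑ ij ∈ antidiagonal (e + 1), F ij - F (e + 1, 0) := by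
    rw [Nat.sum_antidiagonal_succ', add_sub_cancel_left, evenCoeffSum_apply]
    refine sum_congr rfl fun ij _ => ?_
    rw [coeff_expXY_mul_X_one_pow, if_pos (by omega)]
    simp only [F, Nat.add_sub_cancel, mul_add, mul_one]
  have hy : evenCoeffSum e (p * X 1 * X 2 * X 2 ^ 2)
      = ∑ ij ∈ antidiagonal (e + 1), F ij - F (0, e + 1) := by
    rw [Nat.sum_antidiagonal_succ, add_sub_cancel_left, evenCoeffSum_apply]
    refine sum_congr rfl fun ij _ => ?_
    rw [coeff_expXY_mul_X_two_pow, if_pos (by omega)]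
    simp only [F, Nat.add_sub_cancel, mul_add, mul_one]
  have hx0 : F (e + 1, 0) = 0 := by
    simpa [F] using coeff_expXY_mul_X_two_pow (2 * (e + 1)) 0 1 (p * X 1)
  have hy0 : F (0, e + 1) = 0 := by
    simpa [F, mul_right_comm p (X 1)] using coeff_expXY_mul_X_one_pow 0 (2 * (e + 1)) 1 (p * X 2)
  rw [hx, hy, hx0, hy0]

theorem evenCoeffSum_mul_quartic (e : ℕ) (p : MvPolynomial (Fin 3) R) :
    evenCoeffSum e (p * quartic (X 0) (X 1) (X 2)) = 0 := by
  rw [show p * quartic (X 0) (X 1) (X 2) = p * X 1 * X 2 * X 1 ^ 2 - p * X 1 * X 2 * X 2 ^ 2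
      - X 0 * (p * X 1 * X 2 ^ 2 * (X 1 - X 2)) by unfold quartic; ring]
  rw [map_sub, map_sub, evenCoeffSum_mul_X_one_sq, evenCoeffSum_X_zero_mul, sub_self, sub_zero]

theorem evenCoeffSum_eq_zero_of_mem_gensIdeal {e n : ℕ} (hn : 2 * e + 2 < n)
    {z : MvPolynomial (Fin 3) R} (hz : z ∈ gensIdeal (X 0) (X 1) (X 2) n) :
    evenCoeffSum e z = 0 := by
  refine Ideal.addMonoidHom_eq_zero_of_mem_span (evenCoeffSum e).toAddMonoidHom ?_ hz
  rintro p a (rfl | rfl | rfl)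
  exacts [evenCoeffSum_mul_X_one_pow hn p, evenCoeffSum_mul_X_two_pow hn p,
    evenCoeffSum_mul_quartic e p]

theorem evenCoeffSum_altSum (e : ℕ) :
    evenCoeffSum e (altSum (X 1 : MvPolynomial (Fin 3) R) (X 2) (2 * e + 3)) = e + 1 := by
  have hterm : ∀ j, (-1 : MvPolynomial (Fin 3) R) ^ j * X 1 ^ (2 * e + 3 + 1 - j) * X 2 ^ j
      = monomial (expXY (2 * e + 4 - j) j) ((-1) ^ j) := by
    intro j
    rw [← C_mul_X_pow_mul_X_pow, map_pow, map_neg, map_one]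
  have hcoeff : ∀ ij ∈ antidiagonal e, coeff (expXY (2 * ij.1 + 2) (2 * ij.2 + 2))
      (altSum (X 1 : MvPolynomial (Fin 3) R) (X 2) (2 * e + 3)) = 1 := by
    intro ij hij
    rw [HasAntidiagonal.mem_antidiagonal] at hij
    simp only [altSum, hterm, coeff_sum, coeff_monomial]
    rw [sum_eq_single (2 * ij.2 + 2)]
    · rw [if_pos (by congr 1; omega), pow_add, pow_mul]
      simp
    · intro j _ hj
      exact if_neg fun h => hj (expXY_injective h).2
    · intro h
      exact absurd (mem_Icc.mpr (by omega)) h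
  rw [evenCoeffSum_apply, sum_congr rfl hcoeff, sum_const, Nat.card_antidiagonal, nsmul_one]
  push_cast
  ring

theorem altSum_not_mem_gensIdeal {e : ℕ} (he : (e + 1 : R) ≠ 0) :
    altSum (X 1 : MvPolynomial (Fin 3) R) (X 2) (2 * e + 3) ∉
      gensIdeal (X 0) (X 1) (X 2) (2 * e + 3) := fun hmem =>
  he <| by
    rw [← evenCoeffSum_altSum]
    exact evenCoeffSum_eq_zero_of_mem_gensIdeal (by omega) hmem

end Polynomial

end SocleColon

open SocleColon in
theorem stmt_9_general (k : Type*) [Field k] (m n : ℕ) (hchar : (m : k) ≠ 0)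
    (hn : n = 2 * m + 1) :
    (∑ j ∈ Finset.Icc 2 (n - 1),
        (-1 : MvPolynomial (Fin 3) k) ^ j * X 1 ^ (n + 1 - j) * X 2 ^ j) ∉
      Ideal.span {(X 1 : MvPolynomial (Fin 3) k) ^ n, X 2 ^ n,
        X 1 * X 2 * (X 1 - X 2) * (X 1 + X 2 - X 0 * X 2)} ∧
    Submodule.colon
        (Ideal.span {(X 1 : MvPolynomial (Fin 3) k) ^ n, X 2 ^ n,
          X 1 * X 2 * (X 1 - X 2) * (X 1 + X 2 - X 0 * X 2)})
        (Ideal.span {∑ j ∈ Finset.Icc 2 (n - 1),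
          (-1 : MvPolynomial (Fin 3) k) ^ j * X 1 ^ (n + 1 - j) * X 2 ^ j}) =
      Ideal.span {(X 0 : MvPolynomial (Fin 3) k), X 1, X 2} := by
  obtain ⟨e, rfl⟩ : ∃ e, m = e + 1 :=
    Nat.exists_eq_succ_of_ne_zero fun h => hchar (by rw [h, Nat.cast_zero])
  obtain rfl : n = 2 * e + 3 := by omega
  have hf := altSum_not_mem_gensIdeal (R := k) (e := e) (by exact_mod_cast hchar)
  have hmax : (Ideal.span {X 0, X 1, X 2} : Ideal (MvPolynomial (Fin 3) k)).IsMaximal :=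
    span_X_fin_three_eq_idealOfVars k ▸ idealOfVars_isMaximal (Fin 3) k
  refine ⟨hf, (hmax.eq_of_le ?_ (span_le_colon_altSum (X 0) (X 1) (X 2) e)).symm⟩
  rw [Ne, Submodule.colon_eq_top_iff_subset]
  exact fun h => hf (h (Ideal.subset_span rfl))

/-- `f ∉ (x^n, y^n, g)`, and consequently `((x^n,y^n,g) : f) = (s,x,y)`. -/
theorem stmt_9 (k : Type*) [Field k] (m n : ℕ) (hm : 4 ≤ m) (hchar : (m : k) ≠ 0)
    (hn : n = 2 * m + 1) :
    (∑ j ∈ Finset.Icc 2 (n - 1),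
        (-1 : MvPolynomial (Fin 3) k) ^ j * X 1 ^ (n + 1 - j) * X 2 ^ j) ∉
      Ideal.span {(X 1 : MvPolynomial (Fin 3) k) ^ n, X 2 ^ n,
        X 1 * X 2 * (X 1 - X 2) * (X 1 + X 2 - X 0 * X 2)} ∧
    Submodule.colon
        (Ideal.span {(X 1 : MvPolynomial (Fin 3) k) ^ n, X 2 ^ n,
          X 1 * X 2 * (X 1 - X 2) * (X 1 + X 2 - X 0 * X 2)})
        (Ideal.span {∑ j ∈ Finset.Icc 2 (n - 1),
          (-1 : MvPolynomial (Fin 3) k) ^ j * X 1 ^ (n + 1 - j) * X 2 ^ j}) =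
      Ideal.span {(X 0 : MvPolynomial (Fin 3) k), X 1, X 2} :=
  stmt_9_general k m n hchar hn
end

section
/- The zeroth local cohomology module $H^0_{\mathfrak{m}}(A/\mathfrak{e}) = (\mathfrak{e} : \mathfrak{m}^\infty)/\mathfrak{e}$ is isomorphic as an $A$-module to $A/\mathfrak{m} = k$, where $\mathfrak{e} = (x^n, y^n, g)$, $\mathfrak{m} = (s,x,y)$, $g = xy(x-y)(x+y-sy)$. -/
/-!
Let `n = 2 * m + 1` and `q = (x ^ (2 * m) - y ^ (2 * m)) / (x ^ 2 - y ^ 2)`. The element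
`z = x * y ^ 2 * (x - y) * q` satisfies `𝔪 z ⊆ 𝔢`, and every `v` with `s v ∈ 𝔢` lies in `𝔢 + (z)`:
setting `s = 0` reduces this to the colon ideal `((x ^ n, y ^ n) : x y (x ^ 2 - y ^ 2)) =
(x ^ (2 * m), y ^ (2 * m), q)`, which follows from `x` and `y` being non-associated primes.
The linear form `ψ` summing the coefficients of `x ^ (2 * i + 2) * y ^ (2 * m - 2 * i)`, `i < m`,
vanishes on `𝔢 + (s)` while `ψ z = m ≠ 0`. Hence `s` is a nonzerodivisor modulo `𝔢 + (z)`, so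
`(𝔢 : 𝔪^∞) = 𝔢 + (z)`, whose image in `A / 𝔢` is cyclic with annihilator the maximal ideal `𝔪`.
-/

open MvPolynomial Finset

section Saturation

variable {R : Type*} [CommRing R]

theorem Ideal.iSup_colon_pow_le {I J 𝔪 : Ideal R} {s : R} (hs : s ∈ 𝔪) (hIJ : I ≤ J)
    (hJ : ∀ v, s * v ∈ J → v ∈ J) : ⨆ i : ℕ, I.colon ((𝔪 ^ i : Ideal R) : Set R) ≤ J := by
  refine iSup_le fun i => ?_
  induction i with
  | zero => simpa [Ideal.one_eq_top, Submodule.colon_univ] using hIJ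
  | succ i ih =>
    intro v hv
    refine hJ v (ih (Submodule.mem_colon.mpr fun p hp => ?_))
    have hps : p * s ∈ 𝔪 ^ (i + 1) := pow_succ 𝔪 i ▸ Ideal.mul_mem_mul hp hs
    simpa only [smul_eq_mul, mul_comm, mul_left_comm] using Submodule.mem_colon.mp hv _ hps

theorem Ideal.sup_span_singleton_inf_le {𝔪 I J : Ideal R} (h𝔪 : 𝔪.IsMaximal) {z : R}
    (hmz : ∀ r ∈ 𝔪, r * z ∈ I) (hz : z ∉ I ⊔ J) : (I ⊔ span {z}) ⊓ J ≤ I := by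
  rintro _ ⟨hu, huJ⟩
  obtain ⟨w, hw, _, hrz, rfl⟩ := Submodule.mem_sup.mp hu
  obtain ⟨r, rfl⟩ := mem_span_singleton'.mp hrz
  by_cases hr : r ∈ 𝔪
  · exact add_mem hw (hmz r hr)
  · obtain ⟨a, b, hb, hab⟩ := h𝔪.exists_inv hr
    refine absurd ?_ hz
    have hz_eq : z = (b * z - a * w) + a * (w + r * z) := by
      linear_combination (-z) * hab
    rw [hz_eq]
    exact add_mem (mem_sup_left (sub_mem (hmz b hb) (mul_mem_left _ _ hw)))
      (mem_sup_right (mul_mem_left _ _ huJ))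

theorem Ideal.iSup_colon_pow_eq_sup_span_singleton {𝔪 I : Ideal R} (h𝔪 : 𝔪.IsMaximal) {s z : R}
    (hs : s ∈ 𝔪) (hmz : ∀ r ∈ 𝔪, r * z ∈ I) (hz : z ∉ I ⊔ span {s})
    (hcolon : ∀ v, s * v ∈ I → v ∈ I ⊔ span {z}) :
    ⨆ i : ℕ, I.colon ((𝔪 ^ i : Ideal R) : Set R) = I ⊔ span {z} := by
  refine le_antisymm (iSup_colon_pow_le hs le_sup_left fun v hv => hcolon v ?_) (sup_le ?_ ?_)
  · exact sup_span_singleton_inf_le h𝔪 hmz hz ⟨hv, mem_span_singleton'.mpr ⟨v, mul_comm v s⟩⟩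
  · exact le_colon.trans (le_iSup (fun i : ℕ => I.colon ((𝔪 ^ i : Ideal R) : Set R)) 0)
  · refine span_le.mpr (Set.singleton_subset_iff.mpr ?_)
    refine le_iSup (fun i : ℕ => I.colon ((𝔪 ^ i : Ideal R) : Set R)) 1 ?_
    exact Submodule.mem_colon.mpr fun r hr => by
      rw [smul_eq_mul, mul_comm]; exact hmz r (by simpa using hr)

theorem Ideal.torsionOf_eq_of_isMaximal {M : Type*} [AddCommGroup M] [Module R M]
    {𝔪 : Ideal R} (h𝔪 : 𝔪.IsMaximal) {x : M} (hx : x ≠ 0) (h𝔪x : ∀ r ∈ 𝔪, r • x = 0) :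
    torsionOf R M x = 𝔪 :=
  (h𝔪.eq_of_le (mt (torsionOf_eq_top_iff R x).mp hx) h𝔪x).symm

theorem Ideal.nonempty_map_mkQ_iSup_colon_pow_equiv {𝔪 I : Ideal R} (h𝔪 : 𝔪.IsMaximal)
    {s z : R} (hs : s ∈ 𝔪) (hmz : ∀ r ∈ 𝔪, r * z ∈ I) (hz : z ∉ I ⊔ span {s})
    (hcolon : ∀ v, s * v ∈ I → v ∈ I ⊔ span {z}) :
    Nonempty (↥(Submodule.map I.mkQ (⨆ i : ℕ, I.colon ((𝔪 ^ i : Ideal R) : Set R))) ≃ₗ[R]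
      R ⧸ 𝔪) := by
  rw [iSup_colon_pow_eq_sup_span_singleton h𝔪 hs hmz hz hcolon, Submodule.map_sup,
    Submodule.mkQ_map_self, bot_sup_eq, Submodule.map_span, Set.image_singleton]
  have hz0 : I.mkQ z ≠ 0 := by
    rw [Submodule.mkQ_apply, Ne, Submodule.Quotient.mk_eq_zero]
    exact fun h => hz (mem_sup_left h)
  have htors := torsionOf_eq_of_isMaximal h𝔪 hz0 fun r hr => by
    rw [← map_smul, smul_eq_mul, Submodule.mkQ_apply, Submodule.Quotient.mk_eq_zero]
    exact hmz r hr
  exact ⟨(quotTorsionOfEquivSpanSingleton R _ _).symm.trans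
    (Submodule.quotEquivOfEq _ _ htors)⟩

end Saturation

section TwoPrimes

variable {R : Type*} [CommRing R]

theorem mul_mul_geom_sum₂_mem_span (a b t : R) (m : ℕ) :
    a * b * ∑ i ∈ range m, (a ^ 2) ^ i * (b ^ 2) ^ (m - 1 - i) ∈
      Ideal.span {a - t * b, b ^ (2 * m)} := by
  rw [mul_sum]
  refine Ideal.sum_mem _ fun i hi => ?_
  obtain ⟨l, rfl⟩ : ∃ l, m = i + l + 1 := ⟨m - 1 - i, by grind⟩
  obtain ⟨w, hw⟩ := sub_dvd_pow_sub_pow a (t * b) (2 * i + 1)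
  refine Ideal.mem_span_pair.mpr ⟨w * b ^ (2 * l + 1), t ^ (2 * i + 1), ?_⟩
  rw [show i + l + 1 - 1 - i = l by omega]
  linear_combination (-b ^ (2 * l + 1)) * hw

variable [IsDomain R] {x y : R}

theorem mem_span_of_mul_mul_sq_sub_sq_eq (hx : Prime x) (hy : Prime y) (hxy : ¬Associated x y)
    (m : ℕ) {a b c : R}
    (h : c * (x * y * (x ^ 2 - y ^ 2)) = a * x ^ (2 * m + 1) + b * y ^ (2 * m + 1)) :
    c ∈ Ideal.span
      {x ^ (2 * m), y ^ (2 * m), ∑ i ∈ range m, (x ^ 2) ^ i * (y ^ 2) ^ (m - 1 - i)} := by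
  have hxy' (l : ℕ) : ¬x ∣ y ^ l := fun h => hxy (hx.associated_of_dvd hy (hx.dvd_of_dvd_pow h))
  have hyx' (l : ℕ) : ¬y ∣ x ^ l :=
    fun h => hxy (hy.associated_of_dvd hx (hy.dvd_of_dvd_pow h)).symm
  have hxb : x ∣ b * y ^ (2 * m + 1) :=
    ⟨c * y * (x ^ 2 - y ^ 2) - a * x ^ (2 * m), by linear_combination -h⟩
  obtain ⟨b₁, rfl⟩ := (hx.dvd_or_dvd hxb).resolve_right (hxy' _)
  have h₁ : c * (y * (x ^ 2 - y ^ 2)) = a * x ^ (2 * m) + b₁ * y ^ (2 * m + 1) :=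
    mul_left_cancel₀ hx.ne_zero (by linear_combination h)
  have hya : y ∣ a * x ^ (2 * m) :=
    ⟨c * (x ^ 2 - y ^ 2) - b₁ * y ^ (2 * m), by linear_combination -h₁⟩
  obtain ⟨a₁, rfl⟩ := (hy.dvd_or_dvd hya).resolve_right (hyx' _)
  have h₂ : c * (x ^ 2 - y ^ 2) = a₁ * x ^ (2 * m) + b₁ * y ^ (2 * m) :=
    mul_left_cancel₀ hy.ne_zero (by linear_combination h₁)
  set q := ∑ i ∈ range m, (x ^ 2) ^ i * (y ^ 2) ^ (m - 1 - i)
  have hq : q * (x ^ 2 - y ^ 2) = x ^ (2 * m) - y ^ (2 * m) := by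
    rw [geom_sum₂_mul, pow_mul, pow_mul]
  have hdvd : y ^ (2 * m) ∣ x ^ (2 * m) * (c - q * a₁) :=
    ⟨c + q * b₁, by linear_combination q * h₂ - c * hq⟩
  obtain ⟨d, hd⟩ := hy.pow_dvd_of_dvd_mul_left (2 * m) (hyx' _) hdvd
  refine Submodule.mem_span_triple.mpr ⟨0, d, a₁, ?_⟩
  simp only [smul_eq_mul]
  linear_combination -hd

end TwoPrimes

theorem Ideal.apply_eq_zero_of_mem_span {R M F : Type*} [CommSemiring R] [AddCommMonoid M]
    [FunLike F R M] [AddMonoidHomClass F R M] (ψ : F) {S : Set R}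
    (hS : ∀ f ∈ S, ∀ r, ψ (r * f) = 0) {p : R} (hp : p ∈ Ideal.span S) : ψ p = 0 := by
  suffices ∀ r, ψ (r * p) = 0 by simpa using this 1
  induction hp using Submodule.span_induction with
  | mem f hf => exact hS f hf
  | zero => simp
  | add u v _ _ hu hv => intro r; rw [mul_add, map_add, hu, hv, add_zero]
  | smul a u _ hu => intro r; rw [smul_eq_mul, ← mul_assoc]; exact hu _

theorem MvPolynomial.X_dvd_sub_aeval_update_zero {σ R : Type*} [CommRing R] [DecidableEq σ]
    (i : σ) (p : MvPolynomial σ R) : X i ∣ p - aeval (Function.update X i 0) p := by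
  induction p using MvPolynomial.induction_on with
  | C a => simp
  | add p q hp hq => simpa [add_sub_add_comm] using dvd_add hp hq
  | mul_X p j hp =>
    have hXj : X i ∣ X j - Function.update (X : σ → MvPolynomial σ R) i 0 j := by
      rcases eq_or_ne j i with rfl | hji <;> simp [*]
    rw [map_mul, aeval_X]
    convert dvd_add (hp.mul_right (X j)) (hXj.mul_left (aeval (Function.update X i 0) p)) using 1
    ring

theorem MvPolynomial.idealOfVars_eq_ker_constantCoeff {σ R : Type*} [CommRing R] :
    idealOfVars σ R = RingHom.ker constantCoeff := by
  ext p
  rw [← pow_one (idealOfVars σ R), mem_pow_idealOfVars_iff', RingHom.mem_ker, constantCoeff_eq]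
  simp [Finsupp.degree_eq_zero_iff]

namespace FourLines

section CommRing

variable (k : Type*) [CommRing k]

noncomputable def g : MvPolynomial (Fin 3) k := X 1 * X 2 * (X 1 - X 2) * (X 1 + X 2 - X 0 * X 2)

noncomputable def ideal (m : ℕ) : Ideal (MvPolynomial (Fin 3) k) :=
  Ideal.span {X 1 ^ (2 * m + 1), X 2 ^ (2 * m + 1), g k}

noncomputable def maxIdeal : Ideal (MvPolynomial (Fin 3) k) := Ideal.span {X 0, X 1, X 2}

noncomputable def q (m : ℕ) : MvPolynomial (Fin 3) k :=
  ∑ i ∈ range m, (X 1 ^ 2) ^ i * (X 2 ^ 2) ^ (m - 1 - i)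

noncomputable def socleGen (m : ℕ) : MvPolynomial (Fin 3) k := X 1 * X 2 ^ 2 * (X 1 - X 2) * q k m

variable {k}

theorem q_mul_sq_sub_sq (m : ℕ) : q k m * (X 1 ^ 2 - X 2 ^ 2) = X 1 ^ (2 * m) - X 2 ^ (2 * m) := by
  rw [q, geom_sum₂_mul, pow_mul, pow_mul]

theorem mem_ideal_iff {m : ℕ} {p : MvPolynomial (Fin 3) k} :
    p ∈ ideal k m ↔ ∃ a b c, a * X 1 ^ (2 * m + 1) + b * X 2 ^ (2 * m + 1) + c * g k = p := by
  simp only [ideal, Submodule.mem_span_triple, smul_eq_mul]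

theorem X0_mul_socleGen_mem (m : ℕ) : X 0 * socleGen k m ∈ ideal k m :=
  mem_ideal_iff.mpr ⟨X 2, -X 1, -q k m, by
    rw [socleGen, g]; linear_combination (-(X 1 * X 2)) * q_mul_sq_sub_sq (k := k) m⟩

theorem X1_mul_socleGen_mem (m : ℕ) : X 1 * socleGen k m ∈ ideal k m := by
  obtain ⟨a, b, hab⟩ := Ideal.mem_span_pair.mp (mul_mul_geom_sum₂_mem_span
    (X 1 : MvPolynomial (Fin 3) k) (X 2) (X 0 - 1) m)
  exact mem_ideal_iff.mpr ⟨0, b * X 1 * (X 1 - X 2), a, by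
    rw [socleGen, q, g]; linear_combination (X 1 * X 2 * (X 1 - X 2)) * hab⟩

theorem X2_mul_socleGen_mem (m : ℕ) : X 2 * socleGen k m ∈ ideal k m := by
  have hsum : (X 1 + X 2) * socleGen k m ∈ ideal k m :=
    mem_ideal_iff.mpr ⟨X 2 ^ 2, -(X 1 * X 2), 0, by
      rw [socleGen]; linear_combination (-(X 1 * X 2 ^ 2)) * q_mul_sq_sub_sq (k := k) m⟩
  convert sub_mem hsum (X1_mul_socleGen_mem m) using 1
  ring

theorem mul_socleGen_mem (m : ℕ) : ∀ r ∈ maxIdeal k, r * socleGen k m ∈ ideal k m := by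
  have h : maxIdeal k ≤ (ideal k m).colon {socleGen k m} := by
    refine Ideal.span_le.mpr ?_
    rintro _ (rfl | rfl | rfl) <;> rw [SetLike.mem_coe, Submodule.mem_colon_singleton, smul_eq_mul]
    exacts [X0_mul_socleGen_mem m, X1_mul_socleGen_mem m, X2_mul_socleGen_mem m]
  exact fun r hr => Submodule.mem_colon_singleton.mp (h hr)

noncomputable def xyExp (a b : ℕ) : Fin 3 →₀ ℕ := Finsupp.single 1 a + Finsupp.single 2 b

theorem xyExp_le_xyExp {a b c d : ℕ} : xyExp c d ≤ xyExp a b ↔ c ≤ a ∧ d ≤ b := by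
  refine ⟨fun h => ⟨by simpa [xyExp] using h 1, by simpa [xyExp] using h 2⟩, fun h i => ?_⟩
  fin_cases i <;> simp [xyExp, h.1, h.2]

theorem xyExp_sub_xyExp (a b c d : ℕ) : xyExp a b - xyExp c d = xyExp (a - c) (b - d) := by
  ext i
  fin_cases i <;> simp [xyExp]

theorem xyExp_inj {a b c d : ℕ} : xyExp a b = xyExp c d ↔ a = c ∧ b = d := by
  refine ⟨fun h => ⟨by simpa [xyExp] using DFunLike.congr_fun h 1,
    by simpa [xyExp] using DFunLike.congr_fun h 2⟩, by rintro ⟨rfl, rfl⟩; rfl⟩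

theorem X1_pow_mul_X2_pow (a b : ℕ) :
    (X 1 ^ a * X 2 ^ b : MvPolynomial (Fin 3) k) = monomial (xyExp a b) 1 := by
  rw [X_pow_eq_monomial, X_pow_eq_monomial, monomial_mul, mul_one, xyExp]

theorem coeff_xyExp_mul_X1_pow_mul_X2_pow (p : MvPolynomial (Fin 3) k) (a b c d : ℕ) :
    coeff (xyExp a b) (p * (X 1 ^ c * X 2 ^ d)) =
      if c ≤ a ∧ d ≤ b then coeff (xyExp (a - c) (b - d)) p else 0 := by
  simp only [X1_pow_mul_X2_pow, coeff_mul_monomial', xyExp_le_xyExp, xyExp_sub_xyExp, mul_one]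

theorem coeff_xyExp_X0_mul (p : MvPolynomial (Fin 3) k) (a b : ℕ) :
    coeff (xyExp a b) (X 0 * p) = 0 := by
  rw [coeff_X_mul', if_neg]
  simp [xyExp]

theorem q_eq_sum_monomial (m : ℕ) :
    q k m = ∑ j ∈ range m, monomial (xyExp (2 * j) (2 * (m - 1 - j))) 1 := by
  simp only [q, ← pow_mul, X1_pow_mul_X2_pow]

theorem coeff_q_even {m i : ℕ} (hi : i < m) :
    coeff (xyExp (2 * i) (2 * m - 2 * i - 2)) (q k m) = 1 := by
  rw [q_eq_sum_monomial, coeff_sum, sum_eq_single_of_mem i (mem_range.mpr hi)]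
  · rw [coeff_monomial, if_pos (xyExp_inj.mpr ⟨rfl, by omega⟩)]
  · intro j _ hji
    rw [coeff_monomial, if_neg (fun h => hji (by have := (xyExp_inj.mp h).1; omega))]

theorem coeff_q_odd (m i b : ℕ) : coeff (xyExp (2 * i + 1) b) (q k m) = 0 := by
  rw [q_eq_sum_monomial, coeff_sum]
  refine sum_eq_zero fun j _ => ?_
  rw [coeff_monomial, if_neg (fun h => by have := (xyExp_inj.mp h).1; omega)]

noncomputable def psi (m : ℕ) : MvPolynomial (Fin 3) k →ₗ[k] k :=
  ∑ i ∈ range m, lcoeff k (xyExp (2 * i + 2) (2 * m - 2 * i))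

theorem psi_apply (m : ℕ) (p : MvPolynomial (Fin 3) k) :
    psi m p = ∑ i ∈ range m, coeff (xyExp (2 * i + 2) (2 * m - 2 * i)) p := by
  simp [psi]

theorem psi_X0_mul (m : ℕ) (p : MvPolynomial (Fin 3) k) : psi m (X 0 * p) = 0 := by
  simp only [psi_apply, coeff_xyExp_X0_mul, sum_const_zero]

theorem psi_mul_X1_pow_mul_X2_pow (m : ℕ) (p : MvPolynomial (Fin 3) k) (c d : ℕ) :
    psi m (p * (X 1 ^ c * X 2 ^ d)) = ∑ i ∈ range m,
      if c ≤ 2 * i + 2 ∧ d ≤ 2 * m - 2 * i then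
        coeff (xyExp (2 * i + 2 - c) (2 * m - 2 * i - d)) p else 0 := by
  simp only [psi_apply, coeff_xyExp_mul_X1_pow_mul_X2_pow]

theorem psi_mul_X1_pow (m : ℕ) (p : MvPolynomial (Fin 3) k) :
    psi m (p * X 1 ^ (2 * m + 1)) = 0 := by
  rw [← mul_one (X 1 ^ _), ← pow_zero (X 2), psi_mul_X1_pow_mul_X2_pow]
  exact sum_eq_zero fun i hi => if_neg (by have := mem_range.mp hi; omega)

theorem psi_mul_X2_pow (m : ℕ) (p : MvPolynomial (Fin 3) k) :
    psi m (p * X 2 ^ (2 * m + 1)) = 0 := by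
  rw [← one_mul (X 2 ^ _), ← pow_zero (X 1), psi_mul_X1_pow_mul_X2_pow]
  exact sum_eq_zero fun i hi => if_neg (by have := mem_range.mp hi; omega)

theorem psi_mul_g (m : ℕ) (p : MvPolynomial (Fin 3) k) : psi m (p * g k) = 0 := by
  have hg : p * g k = p * (X 1 ^ 3 * X 2 ^ 1) - p * (X 1 ^ 1 * X 2 ^ 3) -
      X 0 * (p * (X 1 ^ 2 * X 2 ^ 2 - X 1 ^ 1 * X 2 ^ 3)) := by
    rw [g]; ring
  rw [hg, map_sub, map_sub, psi_X0_mul, sub_zero, sub_eq_zero, psi_mul_X1_pow_mul_X2_pow,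
    psi_mul_X1_pow_mul_X2_pow]
  rcases m with _ | m
  · simp
  rw [sum_range_succ', sum_range_succ, if_neg (by omega), if_neg (by omega), add_zero, add_zero]
  refine sum_congr rfl fun i hi => ?_
  have := mem_range.mp hi
  rw [if_pos (by omega), if_pos (by omega)]
  congr 2

theorem psi_socleGen (m : ℕ) : psi m (socleGen k m) = m := by
  have hz : socleGen k m = q k m * (X 1 ^ 2 * X 2 ^ 2) - q k m * (X 1 ^ 1 * X 2 ^ 3) := by
    rw [socleGen]; ring
  rw [hz, map_sub, psi_mul_X1_pow_mul_X2_pow, psi_mul_X1_pow_mul_X2_pow]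
  have heven : ∀ i ∈ range m, (if 2 ≤ 2 * i + 2 ∧ 2 ≤ 2 * m - 2 * i then
      coeff (xyExp (2 * i + 2 - 2) (2 * m - 2 * i - 2)) (q k m) else 0) = 1 := fun i hi => by
    have := mem_range.mp hi
    rw [if_pos (by omega), Nat.add_sub_cancel, coeff_q_even this]
  have hodd : ∀ i ∈ range m, (if 1 ≤ 2 * i + 2 ∧ 3 ≤ 2 * m - 2 * i then
      coeff (xyExp (2 * i + 2 - 1) (2 * m - 2 * i - 3)) (q k m) else 0) = 0 := fun i _ => by
    split_ifs
    · exact coeff_q_odd m i _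
    · rfl
  rw [sum_congr rfl heven, sum_congr rfl hodd]
  simp

theorem socleGen_notMem (m : ℕ) (hchar : (m : k) ≠ 0) :
    socleGen k m ∉ ideal k m ⊔ Ideal.span {X 0} := by
  intro h
  rw [ideal, ← Ideal.span_union] at h
  refine hchar ((psi_socleGen m).symm.trans (Ideal.apply_eq_zero_of_mem_span (psi m) ?_ h))
  rintro f ((rfl | rfl | rfl) | rfl) r
  exacts [psi_mul_X1_pow m r, psi_mul_X2_pow m r, psi_mul_g m r, mul_comm r (X 0) ▸ psi_X0_mul m r]

end CommRing

section Field

variable {k : Type*} [Field k]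

theorem maxIdeal_isMaximal : (maxIdeal k).IsMaximal := by
  have h : maxIdeal k = idealOfVars (Fin 3) k := by
    rw [maxIdeal, idealOfVars]
    congr 1
    ext p
    simp [Fin.exists_fin_succ, eq_comm]
  rw [h, idealOfVars_eq_ker_constantCoeff]
  exact RingHom.ker_isMaximal_of_surjective _ fun a => ⟨C a, constantCoeff_C _ a⟩

theorem mem_sup_span_socleGen_of_X0_mul_mem {m : ℕ} {v : MvPolynomial (Fin 3) k}
    (hv : X 0 * v ∈ ideal k m) : v ∈ ideal k m ⊔ Ideal.span {socleGen k m} := by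
  obtain ⟨a, b, c, habc⟩ := mem_ideal_iff.mp hv
  obtain ⟨a₁, ha⟩ := X_dvd_sub_aeval_update_zero 0 a
  obtain ⟨b₁, hb⟩ := X_dvd_sub_aeval_update_zero 0 b
  obtain ⟨c₁, hc₁⟩ := X_dvd_sub_aeval_update_zero 0 c
  set ev := aeval (R := k) (Function.update (X : Fin 3 → MvPolynomial (Fin 3) k) 0 0)
  have h₀ : ev c * (X 1 * X 2 * (X 1 ^ 2 - X 2 ^ 2)) =
      -ev a * X 1 ^ (2 * m + 1) + -ev b * X 2 ^ (2 * m + 1) := by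
    have := congrArg ev habc
    simp only [ev, g, map_add, map_sub, map_mul, map_pow, aeval_X, Function.update_self,
      ne_eq, Fin.reduceEq, not_false_eq_true, Function.update_of_ne] at this
    linear_combination this
  have hX12 : ¬Associated (X 1 : MvPolynomial (Fin 3) k) (X 2) :=
    fun h => absurd (X_dvd_X.mp h.dvd) (by decide)
  obtain ⟨α, β, γ, hc⟩ := Submodule.mem_span_triple.mp
    (mem_span_of_mul_mul_sq_sub_sq_eq X_prime X_prime hX12 m h₀)
  simp only [smul_eq_mul] at hc
  have hv' : v = (a₁ - α * X 2 ^ 2 * (X 1 - X 2)) * X 1 ^ (2 * m + 1) +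
      (b₁ - β * X 1 * X 2 * (X 1 - X 2)) * X 2 ^ (2 * m + 1) + c₁ * g k - γ * socleGen k m := by
    refine mul_left_cancel₀ (X_ne_zero 0) ?_
    simp only [socleGen, q, g] at habc ⊢
    linear_combination -habc + h₀ + X 1 ^ (2 * m + 1) * ha + X 2 ^ (2 * m + 1) * hb +
      (X 1 * X 2 * (X 1 - X 2) * (X 1 + X 2 - X 0 * X 2)) * hc₁ +
      (X 0 * X 1 * X 2 ^ 2 * (X 1 - X 2)) * hc
  rw [hv']
  exact sub_mem (Ideal.mem_sup_left (mem_ideal_iff.mpr ⟨_, _, _, rfl⟩))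
    (Ideal.mem_sup_right (Ideal.mem_span_singleton'.mpr ⟨γ, rfl⟩))

end Field

end FourLines

theorem stmt_12_general (k : Type*) [Field k] (m n : ℕ) (hchar : (m : k) ≠ 0)
    (hn : n = 2 * m + 1) :
    Nonempty
      ((↥(Submodule.map
          (Submodule.mkQ (Ideal.span {(X 1 : MvPolynomial (Fin 3) k) ^ n, X 2 ^ n,
            X 1 * X 2 * (X 1 - X 2) * (X 1 + X 2 - X 0 * X 2)} : Ideal (MvPolynomial (Fin 3) k)))
          (⨆ i : ℕ, Submodule.colon
            (Ideal.span {(X 1 : MvPolynomial (Fin 3) k) ^ n, X 2 ^ n,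
              X 1 * X 2 * (X 1 - X 2) * (X 1 + X 2 - X 0 * X 2)})
            (((Ideal.span {(X 0 : MvPolynomial (Fin 3) k), X 1, X 2}) ^ i : Ideal (MvPolynomial (Fin 3) k)) : Set (MvPolynomial (Fin 3) k))))) ≃ₗ[MvPolynomial (Fin 3) k]
        (MvPolynomial (Fin 3) k ⧸
          (Ideal.span {(X 0 : MvPolynomial (Fin 3) k), X 1, X 2} : Ideal (MvPolynomial (Fin 3) k)))) := by
  subst hn
  exact Ideal.nonempty_map_mkQ_iSup_colon_pow_equiv FourLines.maxIdeal_isMaximal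
    (Ideal.subset_span (by simp)) (FourLines.mul_socleGen_mem m)
    (FourLines.socleGen_notMem m hchar) fun _ => FourLines.mem_sup_span_socleGen_of_X0_mul_mem

/-- `H^0_𝔪(A/𝔢) = (𝔢 : 𝔪^∞)/𝔢 ≅ A/𝔪` as `A`-modules, where `𝔢 = (x^n, y^n, g)`,
`𝔪 = (s,x,y)`, realized as the image of the saturation in `A ⧸ 𝔢`. -/
theorem stmt_12 (k : Type*) [Field k] (m n : ℕ) (hm : 4 ≤ m) (hchar : (m : k) ≠ 0)
    (hn : n = 2 * m + 1) :
    Nonempty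
      ((↥(Submodule.map
          (Submodule.mkQ (Ideal.span {(X 1 : MvPolynomial (Fin 3) k) ^ n, X 2 ^ n,
            X 1 * X 2 * (X 1 - X 2) * (X 1 + X 2 - X 0 * X 2)} : Ideal (MvPolynomial (Fin 3) k)))
          (⨆ i : ℕ, Submodule.colon
            (Ideal.span {(X 1 : MvPolynomial (Fin 3) k) ^ n, X 2 ^ n,
              X 1 * X 2 * (X 1 - X 2) * (X 1 + X 2 - X 0 * X 2)})
            (((Ideal.span {(X 0 : MvPolynomial (Fin 3) k), X 1, X 2}) ^ i : Ideal (MvPolynomial (Fin 3) k)) : Set (MvPolynomial (Fin 3) k))))) ≃ₗ[MvPolynomial (Fin 3) k]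
        (MvPolynomial (Fin 3) k ⧸
          (Ideal.span {(X 0 : MvPolynomial (Fin 3) k), X 1, X 2} : Ideal (MvPolynomial (Fin 3) k)))) :=
  stmt_12_general k m n hchar hn
end

section
/- In the ring $R = k[s,x,y]/(xy(x-y)(x+y-sy))$ with $k$ of odd characteristic $p$, for any power $q = p^e$ ($e \geq 1$) and any $j$ with $q+2 \leq j \leq pq-1$, the image of $x^j y^{pq+1-j}$ lies in the ideal generated by $x^q y^{pq-q}$. -/
open MvPolynomial

/-- In `R = k[s,x,y]/(g)` with `char k = p` odd, `q = p^e`, for `q+2 ≤ j ≤ pq-1`,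
the image of `x^j y^(pq+1-j)` lies in the ideal generated by `x^q y^(pq-q)`. -/
theorem stmt_13 (k : Type*) [Field k] (p : ℕ) (hp : p.Prime) (hodd : p ≠ 2)
    [CharP k p] (e q : ℕ) (he : 1 ≤ e) (hq : q = p ^ e) (j : ℕ)
    (hj1 : q + 2 ≤ j) (hj2 : j ≤ p * q - 1) :
    Ideal.Quotient.mk
        (Ideal.span {(X 1 : MvPolynomial (Fin 3) k) * X 2 * (X 1 - X 2) *
          (X 1 + X 2 - X 0 * X 2)})
        (X 1 ^ j * X 2 ^ (p * q + 1 - j)) ∈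
      Ideal.span {Ideal.Quotient.mk
        (Ideal.span {(X 1 : MvPolynomial (Fin 3) k) * X 2 * (X 1 - X 2) *
          (X 1 + X 2 - X 0 * X 2)})
        (X 1 ^ q * X 2 ^ (p * q - q))} := by
  have hp3 : 3 ≤ p := by have := hp.two_le; omega
  have hq3 : 3 ≤ q := by
    have : p ≤ p ^ e := Nat.le_self_pow (by omega) p
    omega
  have hpq : q + 3 ≤ p * q := by nlinarith
  set g : MvPolynomial (Fin 3) k :=
    (X 1 : MvPolynomial (Fin 3) k) * X 2 * (X 1 - X 2) * (X 1 + X 2 - X 0 * X 2) with hg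
  set I : Ideal (MvPolynomial (Fin 3) k) := Ideal.span {g} with hI
  suffices H : ∀ j, q ≤ j → j ≤ p * q - 1 →
      Ideal.Quotient.mk I (X 1 ^ j * X 2 ^ (p * q + 1 - j)) ∈
        Ideal.span {Ideal.Quotient.mk I (X 1 ^ q * X 2 ^ (p * q - q))} by
    exact H j (by omega) hj2
  clear hj1 hj2
  intro j
  induction j using Nat.strong_induction_on with
  | _ j ih =>
    intro hjq hjle
    rcases lt_or_ge j (q + 2) with hcase | hcase
    · -- base cases j = q or j = q + 1
      rw [Ideal.mem_span_singleton]
      rcases (by omega : j = q ∨ j = q + 1) with h | h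
      · refine ⟨Ideal.Quotient.mk I (X 2), ?_⟩
        rw [← map_mul]
        congr 1
        rw [h, show p * q + 1 - q = (p * q - q) + 1 by omega]
        ring
      · refine ⟨Ideal.Quotient.mk I (X 1), ?_⟩
        rw [← map_mul]
        congr 1
        rw [h, show p * q + 1 - (q + 1) = p * q - q by omega]
        ring
    · -- inductive step: j ≥ q + 2
      obtain ⟨a, rfl⟩ : ∃ a, j = a + 3 := ⟨j - 3, by omega⟩
      obtain ⟨b, hb⟩ : ∃ b, p * q = (a + 3) + b + 1 := ⟨p * q - (a + 3) - 1, by omega⟩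
      have key : Ideal.Quotient.mk I (X 1 ^ (a + 3) * X 2 ^ (p * q + 1 - (a + 3))) =
          Ideal.Quotient.mk I (X 0) *
            Ideal.Quotient.mk I (X 1 ^ (a + 2) * X 2 ^ (p * q + 1 - (a + 2))) +
          (1 - Ideal.Quotient.mk I (X 0)) *
            Ideal.Quotient.mk I (X 1 ^ (a + 1) * X 2 ^ (p * q + 1 - (a + 1))) := by
        rw [show p * q + 1 - (a + 3) = b + 2 by omega,
            show p * q + 1 - (a + 2) = b + 3 by omega,
            show p * q + 1 - (a + 1) = b + 4 by omega]
        rw [← map_mul, ← map_one (Ideal.Quotient.mk I), ← map_sub, ← map_mul, ← map_add]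
        rw [Ideal.Quotient.eq, hI, Ideal.mem_span_singleton]
        exact ⟨X 1 ^ a * X 2 ^ (b + 1), by rw [hg]; ring⟩
      rw [key]
      exact Ideal.add_mem _
        (Ideal.mul_mem_left _ _ (ih (a + 2) (by omega) (by omega) (by omega)))
        (Ideal.mul_mem_left _ _ (ih (a + 1) (by omega) (by omega) (by omega)))
end

section
/- In the ring $R = k[s,x,y]/(xy(x-y)(x+y-sy))$ with $k$ of odd characteristic $p$, for any power $q = p^e$ ($e \geq 1$) and any $j$ with $2 \leq j \leq pq-1$, the image of $x^j y^{pq+1-j}$ lies in the ideal $(x^q, y^q)^p R$. Consequently, the image $z$ of $f = \sum_{j=2}^{pq-1} (-1)^j x^{pq+1-j} y^j$ lies in $I^{[q]} = ((x,y)^p)^{[q]} = (x^q,y^q)^p R$. -/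
open MvPolynomial Finset

/-!
Put `w = x y (x - y)` and `r = s - 1`, so that `g = w (x - r y)` and `w x = r w y` in `R`. Then the
monomials `u_a = x^(a+1) y^(pq-a)` of degree `pq + 1` have consecutive differences
`u_(a+1) - u_a = r^a d` with `d = w y^(pq-2)`, i.e. `u_a = u_0 + (1 + r + ⋯ + r^(a-1)) d`.
The monomials `u_0`, `u_(q-1)`, `u_q` visibly lie in `J = (x^q, y^q)^p`, so `r^(q-1) d ∈ J` and
`(1 + r + ⋯ + r^(q-1)) d ∈ J`. The geometric sum is `≡ 1 mod r`, so the two coefficients are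
coprime, whence `d ∈ J` and then every `u_a ∈ J`.
-/

theorem Ideal.mem_of_isCoprime_of_mul_mem {R : Type*} [CommSemiring R] {I : Ideal R} {u v d : R}
    (h : IsCoprime u v) (hu : u * d ∈ I) (hv : v * d ∈ I) : d ∈ I := by
  obtain ⟨a, b, hab⟩ := h
  rw [← one_mul d, ← hab, add_mul, mul_assoc, mul_assoc]
  exact add_mem (I.mul_mem_left a hu) (I.mul_mem_left b hv)

section

variable {R : Type*} [CommRing R] {x y r : R}

theorem pow_mul_pow_mem_span_pow_pow {q n i j a b : ℕ} (ha : q * i ≤ a) (hb : q * j ≤ b)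
    (hn : n ≤ i + j) : x ^ a * y ^ b ∈ Ideal.span {x ^ q, y ^ q} ^ n := by
  have hx : x ^ q ∈ Ideal.span {x ^ q, y ^ q} := Ideal.subset_span (by simp)
  have hy : y ^ q ∈ Ideal.span {x ^ q, y ^ q} := Ideal.subset_span (by simp)
  have hmem := Ideal.mul_mem_mul (Ideal.pow_mem_pow hx i) (Ideal.pow_mem_pow hy j)
  rw [← pow_add] at hmem
  refine Ideal.pow_le_pow_right hn (Ideal.mem_of_dvd _ ?_ hmem)
  rw [← pow_mul, ← pow_mul]
  exact mul_dvd_mul (pow_dvd_pow x ha) (pow_dvd_pow y hb)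

theorem mul_pow_eq_pow_mul_mul_pow {w : R} (h : w * x = r * (w * y)) (a : ℕ) :
    w * x ^ a = r ^ a * (w * y ^ a) := by
  induction a with
  | zero => simp
  | succ a ih => linear_combination x * ih + r ^ a * y ^ a * h

variable (hg : x * y * (x - y) * (x - r * y) = 0)
include hg

theorem pow_succ_mul_pow_eq (a b : ℕ) :
    x ^ (a + 1) * y ^ (b + 2) =
      x * y ^ (a + b + 2) + (∑ i ∈ range a, r ^ i) * (x * y * (x - y) * y ^ (a + b)) := by
  have hw : x * y * (x - y) * x = r * (x * y * (x - y) * y) := by linear_combination hg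
  induction a generalizing b with
  | zero => simp
  | succ a ih =>
    have hstep := mul_pow_eq_pow_mul_mul_pow hw a
    rw [sum_range_succ]
    linear_combination ih (b + 1) + y ^ (b + 1) * hstep

theorem pow_mul_pow_mem_span_pow_pow_of_add_eq {p q i j : ℕ} (hpq : q + 2 ≤ p * q)
    (hi : 1 ≤ i) (hj : 2 ≤ j) (hij : i + j = p * q + 1) :
    x ^ i * y ^ j ∈ Ideal.span {x ^ q, y ^ q} ^ p := by
  have hq : 1 ≤ q := Nat.pos_of_ne_zero (by rintro rfl; simp at hpq)
  have hp : 1 ≤ p := Nat.pos_of_ne_zero (by rintro rfl; simp at hpq)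
  have hsplit : q * (p - 1) + q = p * q := by
    have := Nat.le_mul_of_pos_right q hp
    rw [Nat.mul_sub_one, mul_comm p q]
    omega
  obtain ⟨n, rfl⟩ : ∃ n, q = n + 1 := ⟨q - 1, by omega⟩
  obtain ⟨m, hm⟩ : ∃ m, p * (n + 1) = m + 2 := ⟨p * (n + 1) - 2, by omega⟩
  set J := Ideal.span {x ^ (n + 1), y ^ (n + 1)} ^ p
  set d := x * y * (x - y) * y ^ m
  have hfirst : x * y ^ (m + 2) ∈ J := by
    simpa using pow_mul_pow_mem_span_pow_pow (x := x) (y := y) (a := 1) (b := m + 2) (i := 0)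
      (j := p) (by omega) (by rw [mul_comm]; omega) le_rfl
  have hmem_iff : ∀ a b, a + b = m →
      (x ^ (a + 1) * y ^ (b + 2) ∈ J ↔ (∑ i ∈ range a, r ^ i) * d ∈ J) := by
    rintro a b rfl
    rw [pow_succ_mul_pow_eq hg, Ideal.add_mem_iff_right _ hfirst]
  have hlow : (∑ i ∈ range n, r ^ i) * d ∈ J := (hmem_iff n (m - n) (by omega)).mp <|
    pow_mul_pow_mem_span_pow_pow (i := 1) (j := p - 1) (by omega) (by omega) (by omega)
  have hhigh : (∑ i ∈ range (n + 1), r ^ i) * d ∈ J :=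
    (hmem_iff (n + 1) (m - n - 1) (by omega)).mp <|
      pow_mul_pow_mem_span_pow_pow (i := 1) (j := p - 1) (by omega) (by omega) (by omega)
  have hpow : r ^ n * d ∈ J := by
    rw [sum_range_succ, add_mul] at hhigh
    exact (Ideal.add_mem_iff_right _ hlow).mp hhigh
  have hcop : IsCoprime (∑ i ∈ range (n + 1), r ^ i) (r ^ n) :=
    IsCoprime.pow_right ⟨1, -∑ i ∈ range n, r ^ i, by rw [geom_sum_succ]; ring⟩
  have hd : d ∈ J := Ideal.mem_of_isCoprime_of_mul_mem hcop hhigh hpow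
  obtain ⟨a, rfl⟩ : ∃ a, i = a + 1 := ⟨i - 1, by omega⟩
  obtain ⟨b, rfl⟩ : ∃ b, j = b + 2 := ⟨j - 2, by omega⟩
  exact (hmem_iff a b (by omega)).mpr (J.mul_mem_left _ hd)

end

theorem stmt_14_general (k : Type*) [Field k] (p : ℕ) (hp : p.Prime)
    (e q : ℕ) (he : 1 ≤ e) (hq : q = p ^ e) :
    (∀ j : ℕ, 2 ≤ j → j ≤ p * q - 1 →
      Ideal.Quotient.mk
          (Ideal.span {(X 1 : MvPolynomial (Fin 3) k) * X 2 * (X 1 - X 2) *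
            (X 1 + X 2 - X 0 * X 2)})
          (X 1 ^ j * X 2 ^ (p * q + 1 - j)) ∈
        (Ideal.span
          {Ideal.Quotient.mk
            (Ideal.span {(X 1 : MvPolynomial (Fin 3) k) * X 2 * (X 1 - X 2) *
              (X 1 + X 2 - X 0 * X 2)}) (X 1 ^ q),
           Ideal.Quotient.mk
            (Ideal.span {(X 1 : MvPolynomial (Fin 3) k) * X 2 * (X 1 - X 2) *
              (X 1 + X 2 - X 0 * X 2)}) (X 2 ^ q)}) ^ p) ∧
    Ideal.Quotient.mk
        (Ideal.span {(X 1 : MvPolynomial (Fin 3) k) * X 2 * (X 1 - X 2) *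
          (X 1 + X 2 - X 0 * X 2)})
        (∑ j ∈ Finset.Icc 2 (p * q - 1),
          (-1 : MvPolynomial (Fin 3) k) ^ j * X 1 ^ (p * q + 1 - j) * X 2 ^ j) ∈
      (Ideal.span
        {Ideal.Quotient.mk
          (Ideal.span {(X 1 : MvPolynomial (Fin 3) k) * X 2 * (X 1 - X 2) *
            (X 1 + X 2 - X 0 * X 2)}) (X 1 ^ q),
         Ideal.Quotient.mk
          (Ideal.span {(X 1 : MvPolynomial (Fin 3) k) * X 2 * (X 1 - X 2) *
            (X 1 + X 2 - X 0 * X 2)}) (X 2 ^ q)}) ^ p := by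
  set mk := Ideal.Quotient.mk (Ideal.span {(X 1 : MvPolynomial (Fin 3) k) * X 2 * (X 1 - X 2) *
    (X 1 + X 2 - X 0 * X 2)})
  have hg : mk (X 1) * mk (X 2) * (mk (X 1) - mk (X 2)) *
      (mk (X 1) - (mk (X 0) - 1) * mk (X 2)) = 0 := by
    have h := Ideal.Quotient.eq_zero_iff_mem.mpr (Ideal.mem_span_singleton_self
      ((X 1 : MvPolynomial (Fin 3) k) * X 2 * (X 1 - X 2) * (X 1 + X 2 - X 0 * X 2)))
    simp only [map_mul, map_sub, map_add] at h
    linear_combination h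
  have hpq : q + 2 ≤ p * q := by
    have hp2 := hp.two_le
    have hq2 : 2 ≤ q := hq ▸ hp2.trans (Nat.le_self_pow (by omega) p)
    nlinarith
  have hmon := fun i j => pow_mul_pow_mem_span_pow_pow_of_add_eq hg hpq (i := i) (j := j)
  simp only [map_mul, map_pow, map_sum] at hmon ⊢
  refine ⟨fun j hj hj' => hmon j _ (by omega) (by omega) (by omega), ?_⟩
  refine Ideal.sum_mem _ fun j hj => ?_
  rw [Finset.mem_Icc] at hj
  rw [mul_assoc (mk (-1) ^ j)]
  exact Ideal.mul_mem_left _ _ (hmon _ _ (by omega) (by omega) (by omega))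

/-- In `R = k[s,x,y]/(g)` with `char k = p` odd, `q = p^e`: for `2 ≤ j ≤ pq-1`, the
image of `x^j y^(pq+1-j)` lies in `(x^q, y^q)^p R`; consequently the image of
`f = ∑_{j=2}^{pq-1} (-1)^j x^(pq+1-j) y^j` lies in `I^{[q]} = (x^q,y^q)^p R`. -/
theorem stmt_14 (k : Type*) [Field k] (p : ℕ) (hp : p.Prime) (hodd : p ≠ 2)
    [CharP k p] (e q : ℕ) (he : 1 ≤ e) (hq : q = p ^ e) :
    (∀ j : ℕ, 2 ≤ j → j ≤ p * q - 1 →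
      Ideal.Quotient.mk
          (Ideal.span {(X 1 : MvPolynomial (Fin 3) k) * X 2 * (X 1 - X 2) *
            (X 1 + X 2 - X 0 * X 2)})
          (X 1 ^ j * X 2 ^ (p * q + 1 - j)) ∈
        (Ideal.span
          {Ideal.Quotient.mk
            (Ideal.span {(X 1 : MvPolynomial (Fin 3) k) * X 2 * (X 1 - X 2) *
              (X 1 + X 2 - X 0 * X 2)}) (X 1 ^ q),
           Ideal.Quotient.mk
            (Ideal.span {(X 1 : MvPolynomial (Fin 3) k) * X 2 * (X 1 - X 2) *
              (X 1 + X 2 - X 0 * X 2)}) (X 2 ^ q)}) ^ p) ∧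
    Ideal.Quotient.mk
        (Ideal.span {(X 1 : MvPolynomial (Fin 3) k) * X 2 * (X 1 - X 2) *
          (X 1 + X 2 - X 0 * X 2)})
        (∑ j ∈ Finset.Icc 2 (p * q - 1),
          (-1 : MvPolynomial (Fin 3) k) ^ j * X 1 ^ (p * q + 1 - j) * X 2 ^ j) ∈
      (Ideal.span
        {Ideal.Quotient.mk
          (Ideal.span {(X 1 : MvPolynomial (Fin 3) k) * X 2 * (X 1 - X 2) *
            (X 1 + X 2 - X 0 * X 2)}) (X 1 ^ q),
         Ideal.Quotient.mk
          (Ideal.span {(X 1 : MvPolynomial (Fin 3) k) * X 2 * (X 1 - X 2) *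
            (X 1 + X 2 - X 0 * X 2)}) (X 2 ^ q)}) ^ p :=
  stmt_14_general k p hp e q he hq
end

section
/- In the polynomial ring $C = L[x,y]$ over a field $L$, the monomial $x^q y^{(p-1)q}$ does not belong to the ideal $(x^{pq}, y^{pq}, xy(x-y))$, for any odd prime $p$ and any $q \geq 1$. -/
open MvPolynomial

private lemma constCoeff_aeval_poly {L : Type*} [Field L]
    (v : Fin 2 → Polynomial L) (a : MvPolynomial (Fin 2) L) :
    Polynomial.constantCoeff (aeval v a) =
      eval (fun i => Polynomial.constantCoeff (v i)) a := by
  induction a using MvPolynomial.induction_on with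
  | C r => simp
  | add f g hf hg => simp [map_add, hf, hg]
  | mul_X f i hf => simp [map_mul, hf]

/-- In `C = L[x,y]`, the monomial `x^q y^((p-1)q)` is not in
`(x^(pq), y^(pq), xy(x-y))`, for any odd prime `p` and `q ≥ 1`. -/
theorem stmt_15 (L : Type*) [Field L] (p q : ℕ) (hp : p.Prime) (hodd : p ≠ 2)
    (hq : 1 ≤ q) :
    (X 0 : MvPolynomial (Fin 2) L) ^ q * X 1 ^ ((p - 1) * q) ∉
      Ideal.span {(X 0 : MvPolynomial (Fin 2) L) ^ (p * q), X 1 ^ (p * q),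
        X 0 * X 1 * (X 0 - X 1)} := by
  intro hmem
  obtain ⟨p', rfl⟩ : ∃ p', p = p' + 1 := ⟨p - 1, (Nat.succ_pred_eq_of_pos hp.pos).symm⟩
  have hp' : 1 ≤ p' := by
    have := hp.two_le; omega
  have hp1 : (p' + 1 - 1) * q = p' * q := by simp
  rw [hp1] at hmem
  rw [Ideal.mem_span_insert] at hmem
  obtain ⟨a, z, hz, heq⟩ := hmem
  rw [Ideal.mem_span_insert] at hz
  obtain ⟨b, w, hw, rfl⟩ := hz
  rw [Ideal.mem_span_singleton] at hw
  obtain ⟨c, rfl⟩ := hw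
  -- three evaluations
  set v1 : Fin 2 → Polynomial L := ![Polynomial.X, Polynomial.X] with hv1
  set v2 : Fin 2 → Polynomial L := ![Polynomial.X, 0] with hv2
  set v3 : Fin 2 → Polynomial L := ![0, Polynomial.X] with hv3
  have hpq : q + p' * q = (p' + 1) * q := by ring
  have hpqne : p' * q ≠ 0 := by positivity
  -- evaluation 2 : a maps to 0
  have H2 := congrArg (aeval v2) heq
  simp only [map_add, map_mul, map_pow, map_sub, aeval_X, hv2,
    Matrix.cons_val_zero, Matrix.cons_val_one, Matrix.head_cons,
    zero_pow hpqne, zero_pow (by positivity : (p' + 1) * q ≠ 0),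
    mul_zero, zero_mul, add_zero, zero_add] at H2
  have ha2 : aeval v2 a = 0 := by
    rcases mul_eq_zero.mp H2.symm with h | h
    · exact h
    · exact absurd h (pow_ne_zero _ Polynomial.X_ne_zero)
  -- evaluation 3 : b maps to 0
  have H3 := congrArg (aeval v3) heq
  simp only [map_add, map_mul, map_pow, map_sub, aeval_X, hv3,
    Matrix.cons_val_zero, Matrix.cons_val_one, Matrix.head_cons,
    zero_pow (by positivity : q ≠ 0), zero_pow (by positivity : (p' + 1) * q ≠ 0),
    mul_zero, zero_mul, add_zero, zero_add] at H3
  have hb3 : aeval v3 b = 0 := by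
    rcases mul_eq_zero.mp H3.symm with h | h
    · exact h
    · exact absurd h (pow_ne_zero _ Polynomial.X_ne_zero)
  -- evaluation 1
  have H1 := congrArg (aeval v1) heq
  simp only [map_add, map_mul, map_pow, map_sub, aeval_X, hv1,
    Matrix.cons_val_zero, Matrix.cons_val_one, Matrix.head_cons,
    sub_self, mul_zero, zero_mul, add_zero] at H1
  rw [← pow_add, hpq] at H1
  have H1c := congrArg (fun f : Polynomial L => f.coeff ((p' + 1) * q)) H1
  simp only [Polynomial.coeff_X_pow, if_pos rfl, Polynomial.coeff_add,
    Polynomial.coeff_mul_X_pow', le_refl, if_true, Nat.sub_self] at H1c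
  -- identify the constant coefficients
  have key1a : (aeval v1 a).coeff 0 = (aeval v2 a).coeff 0 := by
    have e1 := constCoeff_aeval_poly v1 a
    have e2 := constCoeff_aeval_poly v2 a
    simp only [Polynomial.constantCoeff_apply] at e1 e2
    have hfun : (fun i => (v1 i).coeff 0)
        = (fun i => (v2 i).coeff 0) := by
      funext i; fin_cases i <;> simp [hv1, hv2]
    rw [e1, e2, hfun]
  have key1b : (aeval v1 b).coeff 0 = (aeval v3 b).coeff 0 := by
    have e1 := constCoeff_aeval_poly v1 b
    have e3 := constCoeff_aeval_poly v3 b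
    simp only [Polynomial.constantCoeff_apply] at e1 e3
    have hfun : (fun i => (v1 i).coeff 0)
        = (fun i => (v3 i).coeff 0) := by
      funext i; fin_cases i <;> simp [hv1, hv3]
    rw [e1, e3, hfun]
  rw [key1a, key1b, ha2, hb3] at H1c
  simp at H1c
end

section
/- In the ring $R = k[s,x,y]/(xy(x-y)(x+y-sy))$ with $k$ of odd characteristic $p$ and $q = p^e$, the Frobenius power quotient module $(x^q,y^q)^p R / (x^{pq}, y^{pq}) R$ is nonzero after localizing at the prime $\mathfrak{p} = (x,y)$; equivalently, $(x,y)$ is an associated prime of $I^{[q]}/J^{[q]}$ where $I = (x,y)^p$ and $J = (x^p, y^p)$. -/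
/-!
Let `σ = s - 1`, `N = pq` and `m = (σ ^ N - σ) x ^ q y ^ (N - q)`, an element of `(x^q, y^q)^p`.
Both `x m` and `y m` lie in `(x^N, y^N, g)` with `g = x y (x - y) (x - σ y)`: after removing
multiples of `x^N` and `y^N` one is left with a combination of three monomials vanishing on the
lines `x = y` and `x = σ y`, hence divisible by `(x - y)(x - σ y)`.
Conversely, restricting to the components `x = σ y`, `x = 0`, `y = 0` of `g = 0` and taking the
coefficient of `t^N` of `h(s, a t, b t)` gives a `k[s]`-linear functional which kills
`(x^N, y^N, g)` but takes the value `ρ (σ^N - σ) σ^q ≠ 0` on `ρ(s) m`. So the annihilator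
of `m` modulo `(x^N, y^N, g)` is exactly the prime `(x, y)`.
-/

open MvPolynomial Finset
open scoped Polynomial

section CommRing
variable {A : Type*} [CommRing A]

theorem sub_mul_dvd_geom_sum₂_sub (x y c : A) (n : ℕ) :
    x - c * y ∣
      ∑ l ∈ range n, x ^ l * y ^ (n - 1 - l) - (∑ l ∈ range n, c ^ l) * y ^ (n - 1) := by
  rw [sum_mul, ← sum_sub_distrib]
  refine dvd_sum fun l hl => ?_
  have hy : c ^ l * y ^ (n - 1) = (c * y) ^ l * y ^ (n - 1 - l) := by
    rw [mul_pow, mul_assoc, ← pow_add, Nat.add_sub_cancel' (by simp at hl; omega)]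
  rw [hy, ← sub_mul]
  exact (sub_dvd_pow_sub_pow _ _ _).mul_right _

/-- The combination is the determinant with rows `(1, 1, 1)`, `(1, c ^ j, c ^ (i + j))` and
`(y ^ (i + j), x ^ j y ^ i, x ^ (i + j))`, which vanishes at `x = y` and at `x = c y`. -/
theorem sub_mul_sub_dvd_pow_combination (x y c : A) (i j : ℕ) :
    (x - y) * (x - c * y) ∣
      (c ^ (i + j) - 1) * x ^ j * y ^ i - (c ^ j - 1) * x ^ (i + j)
        - (c ^ (i + j) - c ^ j) * y ^ (i + j) := by
  rcases j with _ | j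
  · convert dvd_zero _ using 1
    ring
  set n := i + (j + 1)
  set H := fun m => ∑ l ∈ range m, x ^ l * y ^ (m - 1 - l)
  set G := fun m => ∑ l ∈ range m, c ^ l
  have hfactor : (c ^ n - 1) * x ^ (j + 1) * y ^ i - (c ^ (j + 1) - 1) * x ^ n
        - (c ^ n - c ^ (j + 1)) * y ^ n
      = (x - y) * ((c - 1) * (G n * H (j + 1) * y ^ i - G (j + 1) * H n)) := by
    linear_combination (-y ^ i * (x ^ (j + 1) - y ^ (j + 1))) * geom_sum_mul c n
      - y ^ i * G n * (c - 1) * geom_sum₂_mul x y (j + 1)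
      + (x ^ n - y ^ n) * geom_sum_mul c (j + 1) + G (j + 1) * (c - 1) * geom_sum₂_mul x y n
  have hquot : x - c * y ∣ G n * H (j + 1) * y ^ i - G (j + 1) * H n := by
    have hj := sub_mul_dvd_geom_sum₂_sub x y c (j + 1)
    have hn := sub_mul_dvd_geom_sum₂_sub x y c n
    simp only [Nat.add_sub_cancel, show n - 1 = i + j by omega] at hj hn
    have hsplit : G n * H (j + 1) * y ^ i - G (j + 1) * H n
        = G n * y ^ i * (H (j + 1) - G (j + 1) * y ^ j)
          - G (j + 1) * (H n - G n * y ^ (i + j)) := by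
      ring
    rw [hsplit]
    exact dvd_sub (dvd_mul_of_dvd_right hj _) (dvd_mul_of_dvd_right hn _)
  rw [hfactor]
  exact mul_dvd_mul_left _ (dvd_mul_of_dvd_right hquot _)

theorem pow_sub_mul_pow_mul_pow_mem_span (x y c : A) {i j n : ℕ} (hn : i + j + 1 = n) :
    (c ^ n - c) * x ^ (j + 1) * y ^ (i + 1) ∈
      Ideal.span {x ^ n, y ^ n, x * y * (x - y) * (x - c * y)} := by
  subst hn
  obtain ⟨w, hw⟩ := sub_mul_sub_dvd_pow_combination x y c i j
  have hcomb : (c ^ (i + j + 1) - c) * x ^ (j + 1) * y ^ (i + 1)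
      = ((c ^ (j + 1) - c) * y) * x ^ (i + j + 1)
        + ((c ^ (i + j + 1) - c ^ (j + 1)) * x) * y ^ (i + j + 1)
        + (c * w) * (x * y * (x - y) * (x - c * y)) := by
    linear_combination (x * y * c) * hw
  rw [hcomb]
  refine add_mem (add_mem ?_ ?_) ?_ <;> exact Ideal.mul_mem_left _ _ (Ideal.subset_span (by simp))

end CommRing

theorem mul_pow_mem_span_pair_pow {R : Type*} [CommSemiring R] (x y : R) (n : ℕ) :
    x * y ^ n ∈ Ideal.span {x, y} ^ (n + 1) :=
  pow_succ' (Ideal.span {x, y}) n ▸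
    Ideal.mul_mem_mul (Ideal.subset_span (by simp))
      (Ideal.pow_mem_pow (Ideal.subset_span (by simp)) n)

theorem mem_associatedPrimes_map_mkQ {R M : Type*} [CommRing R] [AddCommGroup M] [Module R M]
    {P : Ideal R} [hP : P.IsPrime] {J I : Submodule R M} {m : M} (hm : m ∈ I)
    (hcolon : ∀ r : R, r • m ∈ J ↔ r ∈ P) : P ∈ associatedPrimes R (I.map J.mkQ) := by
  refine ⟨hP, ⟨J.mkQ m, Submodule.mem_map_of_mem hm⟩, ?_⟩
  rw [eq_comm, ← hP.radical]
  congr 1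
  ext r
  rw [Submodule.mem_colon_singleton, Submodule.mem_bot, ← Submodule.coe_eq_zero,
    Submodule.coe_smul, ← hcolon, ← Submodule.Quotient.mk_eq_zero]
  rfl

theorem mul_mem_map_iff_of_surjective {S T : Type*} [CommRing S] [CommRing T] {f : S →+* T}
    (hf : Function.Surjective f) {K P : Ideal S} (hP : RingHom.ker f ≤ P) {m : S}
    (h : ∀ r, r * m ∈ K ⊔ RingHom.ker f ↔ r ∈ P) (r : T) :
    r * f m ∈ K.map f ↔ r ∈ P.map f := by
  obtain ⟨r, rfl⟩ := hf r
  rw [← map_mul, ← Ideal.mem_comap, ← Ideal.mem_comap, Ideal.comap_map_of_surjective' f hf,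
    Ideal.comap_map_of_surjective' f hf, sup_eq_left.mpr hP, h]

namespace FourLines

variable {k : Type*} [CommRing k]

noncomputable def evalXYZero : MvPolynomial (Fin 3) k →ₐ[k] k[X] := aeval ![Polynomial.X, 0, 0]

theorem ker_evalXYZero : RingHom.ker (evalXYZero (k := k)) = Ideal.span {X 1, X 2} := by
  have hX1 : (X 1 : MvPolynomial (Fin 3) k) ∈ Ideal.span {X 1, X 2} := Ideal.subset_span (by simp)
  have hX2 : (X 2 : MvPolynomial (Fin 3) k) ∈ Ideal.span {X 1, X 2} := Ideal.subset_span (by simp)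
  refine le_antisymm (fun r hr => ?_) (Ideal.span_le.mpr ?_)
  · have hsection : (Ideal.Quotient.mkₐ k _).comp ((Polynomial.aeval (X 0)).comp evalXYZero) =
        Ideal.Quotient.mkₐ k (Ideal.span {X 1, X 2}) := by
      refine MvPolynomial.algHom_ext fun i => ?_
      fin_cases i <;>
        simp [evalXYZero, eq_comm (a := (0 : _ ⧸ _)), Ideal.Quotient.eq_zero_iff_mem, hX1, hX2]
    rw [← Ideal.Quotient.eq_zero_iff_mem, ← Ideal.Quotient.mkₐ_eq_mk k, ← hsection]
    simp [RingHom.mem_ker.mp hr]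
  · rintro _ (rfl | rfl) <;> simp [evalXYZero]

theorem isPrime_span_X1_X2 [IsDomain k] :
    (Ideal.span {X 1, X 2} : Ideal (MvPolynomial (Fin 3) k)).IsPrime := by
  rw [← ker_evalXYZero]
  exact RingHom.ker_isPrime _

/-- `h(s, x, y) ↦ h(s, a t, b t)`, with values in `k[s][t]`. -/
noncomputable def restrictLine (a b : k[X]) : MvPolynomial (Fin 3) k →ₐ[k] k[X][X] :=
  aeval ![Polynomial.C Polynomial.X, Polynomial.C a * Polynomial.X, Polynomial.C b * Polynomial.X]

theorem coeff_zero_restrictLine (a b : k[X]) (h : MvPolynomial (Fin 3) k) :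
    (restrictLine a b h).coeff 0 = evalXYZero h := by
  rw [Polynomial.coeff_zero_eq_eval_zero, ← Polynomial.coe_aeval_eq_eval,
    ← AlgHom.restrictScalars_apply k, ← AlgHom.comp_apply]
  congr 1
  refine MvPolynomial.algHom_ext fun i => ?_
  fin_cases i <;> simp [restrictLine, evalXYZero]

theorem coeff_restrictLine_mul_X1_pow_mul_X2_pow (a b : k[X]) (h : MvPolynomial (Fin 3) k)
    (i j : ℕ) :
    (restrictLine a b (h * X 1 ^ i * X 2 ^ j)).coeff (i + j) = a ^ i * b ^ j * evalXYZero h := by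
  have hexpand : restrictLine a b (h * X 1 ^ i * X 2 ^ j) =
      Polynomial.C (a ^ i * b ^ j) * (restrictLine a b h * Polynomial.X ^ (i + j)) := by
    simp [restrictLine]
    ring
  rw [hexpand, Polynomial.coeff_C_mul, Polynomial.coeff_mul_X_pow', if_pos le_rfl, Nat.sub_self,
    coeff_zero_restrictLine]

theorem restrictLine_quartic (a b : k[X]) :
    restrictLine a b (X 1 * X 2 * (X 1 - X 2) * (X 1 + X 2 - X 0 * X 2)) =
      Polynomial.C (a * b * (a - b) * (a + b - Polynomial.X * b)) * Polynomial.X ^ 4 := by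
  simp [restrictLine]
  ring

/-- The weights `1, -1, -(s - 1) ^ N` of the lines `x = (s - 1) y`, `x = 0`, `y = 0` are chosen so
that the functional kills `x ^ N` and `y ^ N`. -/
noncomputable def lineFunctional (N : ℕ) (h : MvPolynomial (Fin 3) k) : k[X] :=
  (restrictLine (Polynomial.X - 1) 1 h).coeff N - (restrictLine 0 1 h).coeff N
    - (Polynomial.X - 1) ^ N * (restrictLine 1 0 h).coeff N

theorem lineFunctional_eq_zero_of_mem {N : ℕ} (hN : N ≠ 0) {h : MvPolynomial (Fin 3) k}
    (hh : h ∈ Ideal.span {X 1 ^ N, X 2 ^ N, X 1 * X 2 * (X 1 - X 2) * (X 1 + X 2 - X 0 * X 2)}) :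
    lineFunctional N h = 0 := by
  obtain ⟨A, h', hh', rfl⟩ := Ideal.mem_span_insert.mp hh
  obtain ⟨B, h'', hh'', rfl⟩ := Ideal.mem_span_insert.mp hh'
  obtain ⟨C, rfl⟩ := Ideal.mem_span_singleton'.mp hh''
  have hx (a b : k[X]) : (restrictLine a b (A * X 1 ^ N)).coeff N = a ^ N * evalXYZero A := by
    simpa using coeff_restrictLine_mul_X1_pow_mul_X2_pow a b A N 0
  have hy (a b : k[X]) : (restrictLine a b (B * X 2 ^ N)).coeff N = b ^ N * evalXYZero B := by
    simpa using coeff_restrictLine_mul_X1_pow_mul_X2_pow a b B 0 N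
  simp only [lineFunctional, map_add, Polynomial.coeff_add, hx, hy, map_mul (restrictLine _ _) C,
    restrictLine_quartic]
  simp [zero_pow hN]

noncomputable def witness (a b : ℕ) : MvPolynomial (Fin 3) k :=
  ((X 0 - 1) ^ (a + b) - (X 0 - 1)) * X 1 ^ a * X 2 ^ b

theorem lineFunctional_mul_witness {a b : ℕ} (ha : a ≠ 0) (hb : b ≠ 0)
    (r : MvPolynomial (Fin 3) k) :
    lineFunctional (a + b) (r * witness a b) =
      evalXYZero r *
        (((Polynomial.X - 1) ^ (a + b) - (Polynomial.X - 1)) * (Polynomial.X - 1) ^ a) := by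
  simp only [witness, lineFunctional, ← mul_assoc, coeff_restrictLine_mul_X1_pow_mul_X2_pow]
  simp [evalXYZero, zero_pow ha, zero_pow hb]
  ring

theorem mul_witness_mem_span_iff [IsDomain k] {a b : ℕ} (ha : a ≠ 0) (hb : b ≠ 0)
    (r : MvPolynomial (Fin 3) k) :
    r * witness a b ∈ Ideal.span {X 1 ^ (a + b), X 2 ^ (a + b),
        X 1 * X 2 * (X 1 - X 2) * (X 1 + X 2 - X 0 * X 2)} ↔
      r ∈ Ideal.span {X 1, X 2} := by
  constructor
  · intro hmem
    have hdeg : ((Polynomial.X : k[X]) - 1).natDegree = 1 := by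
      simpa using Polynomial.natDegree_X_sub_C (1 : k)
    have hsub : ((Polynomial.X : k[X]) - 1) ^ (a + b) - (Polynomial.X - 1) ≠ 0 := by
      rw [sub_ne_zero]
      intro h
      have := congrArg Polynomial.natDegree h
      rw [Polynomial.natDegree_pow, hdeg] at this
      omega
    have hval := lineFunctional_eq_zero_of_mem (by omega) hmem
    rw [lineFunctional_mul_witness ha hb] at hval
    rw [← ker_evalXYZero, RingHom.mem_ker]
    exact (mul_eq_zero.mp hval).resolve_right
      (mul_ne_zero hsub (pow_ne_zero _ (by simpa using Polynomial.X_sub_C_ne_zero (1 : k))))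
  · intro hr
    obtain ⟨a, rfl⟩ : ∃ a', a = a' + 1 := ⟨a - 1, by omega⟩
    obtain ⟨b, rfl⟩ : ∃ b', b = b' + 1 := ⟨b - 1, by omega⟩
    rw [show (X 1 + X 2 - X 0 * X 2 : MvPolynomial (Fin 3) k) = X 1 - (X 0 - 1) * X 2 by ring]
    have hx := pow_sub_mul_pow_mul_pow_mem_span (X 1 : MvPolynomial (Fin 3) k) (X 2) (X 0 - 1)
      (i := b) (j := a + 1) (n := a + 1 + (b + 1)) (by omega)
    have hy := pow_sub_mul_pow_mul_pow_mem_span (X 1 : MvPolynomial (Fin 3) k) (X 2) (X 0 - 1)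
      (i := b + 1) (j := a) (n := a + 1 + (b + 1)) (by omega)
    obtain ⟨A, B, rfl⟩ := Ideal.mem_span_pair.mp hr
    convert add_mem (Ideal.mul_mem_left _ A hx) (Ideal.mul_mem_left _ B hy) using 1
    simp only [witness]
    ring

end FourLines

theorem stmt_16_general (k : Type*) [Field k] (p : ℕ) (hp : p.Prime) (e q : ℕ) (hq : q = p ^ e) :
    Ideal.span
        {Ideal.Quotient.mk
          (Ideal.span {(X 1 : MvPolynomial (Fin 3) k) * X 2 * (X 1 - X 2) *
            (X 1 + X 2 - X 0 * X 2)}) (X 1),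
         Ideal.Quotient.mk
          (Ideal.span {(X 1 : MvPolynomial (Fin 3) k) * X 2 * (X 1 - X 2) *
            (X 1 + X 2 - X 0 * X 2)}) (X 2)} ∈
      associatedPrimes
        (MvPolynomial (Fin 3) k ⧸
          Ideal.span {(X 1 : MvPolynomial (Fin 3) k) * X 2 * (X 1 - X 2) *
            (X 1 + X 2 - X 0 * X 2)})
        (↥(Submodule.map
          (Submodule.mkQ
            ((Ideal.span
              {Ideal.Quotient.mk
                (Ideal.span {(X 1 : MvPolynomial (Fin 3) k) * X 2 * (X 1 - X 2) *
                  (X 1 + X 2 - X 0 * X 2)}) (X 1 ^ (p * q)),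
               Ideal.Quotient.mk
                (Ideal.span {(X 1 : MvPolynomial (Fin 3) k) * X 2 * (X 1 - X 2) *
                  (X 1 + X 2 - X 0 * X 2)}) (X 2 ^ (p * q))}) :
              Ideal (MvPolynomial (Fin 3) k ⧸
                Ideal.span {(X 1 : MvPolynomial (Fin 3) k) * X 2 * (X 1 - X 2) *
                  (X 1 + X 2 - X 0 * X 2)})))
          ((Ideal.span
            {Ideal.Quotient.mk
              (Ideal.span {(X 1 : MvPolynomial (Fin 3) k) * X 2 * (X 1 - X 2) *
                (X 1 + X 2 - X 0 * X 2)}) (X 1 ^ q),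
             Ideal.Quotient.mk
              (Ideal.span {(X 1 : MvPolynomial (Fin 3) k) * X 2 * (X 1 - X 2) *
                (X 1 + X 2 - X 0 * X 2)}) (X 2 ^ q)}) ^ p))) := by
  set f := Ideal.Quotient.mk (Ideal.span {(X 1 : MvPolynomial (Fin 3) k) * X 2 * (X 1 - X 2) *
    (X 1 + X 2 - X 0 * X 2)})
  have hq0 : q ≠ 0 := hq ▸ pow_ne_zero _ hp.ne_zero
  have hb : q * (p - 1) ≠ 0 := mul_ne_zero hq0 (by have := hp.two_le; omega)
  have hN : q + q * (p - 1) = p * q := by zify [hp.one_le]; ring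
  have hmap (u v : MvPolynomial (Fin 3) k) : Ideal.span {f u, f v} = (Ideal.span {u, v}).map f := by
    rw [Ideal.map_span, Set.image_pair]
  have hker : RingHom.ker f ≤ Ideal.span {X 1, X 2} := by
    rw [Ideal.mk_ker, Ideal.span_singleton_le_iff_mem]
    exact Ideal.mul_mem_right _ _ (Ideal.mul_mem_right _ _ (Ideal.mul_mem_right _ _
      (Ideal.subset_span (by simp))))
  have := Ideal.map_isPrime_of_surjective (H := FourLines.isPrime_span_X1_X2)
    Ideal.Quotient.mk_surjective hker
  rw [hmap (X 1) (X 2)]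
  refine mem_associatedPrimes_map_mkQ (m := f (FourLines.witness q (q * (p - 1)))) ?_ fun r => ?_
  · rw [hmap, ← Ideal.map_pow]
    refine Ideal.mem_map_of_mem f ?_
    rw [FourLines.witness, mul_assoc]
    refine Ideal.mul_mem_left _ _ ?_
    simpa [← pow_mul, Nat.sub_add_cancel hp.one_le] using
      mul_pow_mem_span_pair_pow (X 1 ^ q) (X 2 ^ q) (p - 1)
  · rw [smul_eq_mul, hmap]
    refine mul_mem_map_iff_of_surjective Ideal.Quotient.mk_surjective hker (fun r => ?_) r
    rw [Ideal.mk_ker, ← Ideal.span_union, Set.insert_union, Set.singleton_union, ← hN]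
    exact FourLines.mul_witness_mem_span_iff hq0 hb r

/-- In `R = k[s,x,y]/(g)` with `char k = p` odd, `q = p^e`, the prime `(x,y)` is an
associated prime of `I^{[q]}/J^{[q]}`, where `I = (x,y)^p`, `J = (x^p,y^p)`, so that
`I^{[q]} = (x^q,y^q)^p` and `J^{[q]} = (x^{pq}, y^{pq})`; the quotient is realized as
the image of `I^{[q]}` in `R ⧸ J^{[q]}`. -/
theorem stmt_16 (k : Type*) [Field k] (p : ℕ) (hp : p.Prime) (hodd : p ≠ 2)
    [CharP k p] (e q : ℕ) (he : 1 ≤ e) (hq : q = p ^ e) :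
    Ideal.span
        {Ideal.Quotient.mk
          (Ideal.span {(X 1 : MvPolynomial (Fin 3) k) * X 2 * (X 1 - X 2) *
            (X 1 + X 2 - X 0 * X 2)}) (X 1),
         Ideal.Quotient.mk
          (Ideal.span {(X 1 : MvPolynomial (Fin 3) k) * X 2 * (X 1 - X 2) *
            (X 1 + X 2 - X 0 * X 2)}) (X 2)} ∈
      associatedPrimes
        (MvPolynomial (Fin 3) k ⧸
          Ideal.span {(X 1 : MvPolynomial (Fin 3) k) * X 2 * (X 1 - X 2) *
            (X 1 + X 2 - X 0 * X 2)})
        (↥(Submodule.map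
          (Submodule.mkQ
            ((Ideal.span
              {Ideal.Quotient.mk
                (Ideal.span {(X 1 : MvPolynomial (Fin 3) k) * X 2 * (X 1 - X 2) *
                  (X 1 + X 2 - X 0 * X 2)}) (X 1 ^ (p * q)),
               Ideal.Quotient.mk
                (Ideal.span {(X 1 : MvPolynomial (Fin 3) k) * X 2 * (X 1 - X 2) *
                  (X 1 + X 2 - X 0 * X 2)}) (X 2 ^ (p * q))}) :
              Ideal (MvPolynomial (Fin 3) k ⧸
                Ideal.span {(X 1 : MvPolynomial (Fin 3) k) * X 2 * (X 1 - X 2) *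
                  (X 1 + X 2 - X 0 * X 2)})))
          ((Ideal.span
            {Ideal.Quotient.mk
              (Ideal.span {(X 1 : MvPolynomial (Fin 3) k) * X 2 * (X 1 - X 2) *
                (X 1 + X 2 - X 0 * X 2)}) (X 1 ^ q),
             Ideal.Quotient.mk
              (Ideal.span {(X 1 : MvPolynomial (Fin 3) k) * X 2 * (X 1 - X 2) *
                (X 1 + X 2 - X 0 * X 2)}) (X 2 ^ q)}) ^ p))) :=
  stmt_16_general k p hp e q hq
end
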